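/- arXiv:1501.03690 — 6 statements merged into one kernel-verified Lean document; each statement's English description precedes it below -/
import Mathlib

section
/- Let S be a set with two associative binary operations ⊙ and ⊚ satisfying the middle-four interchange law, and suppose both operations are left and right cancellative. Then both operations are commutative. -/
private theorem dcs_key {S : Type*} (o c : S → S → S)
    (ho : ∀ a b d : S, o (o a b) d = o a (o b d))
    (hc : ∀ a b d : S, c (c a b) d = c a (c b d))
    (hint : ∀ a b x y : S, c (o a b) (o x y) = o (c a x) (c b y))
    (holeft : ∀ a b d : S, o a b = o a d → b = d)
    (horight : ∀ a b d : S, o b a = o d a → b = d)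
    (hcleft : ∀ a b d : S, c a b = c a d → b = d)
    (hcright : ∀ a b d : S, c b a = c d a → b = d) :
    ∀ x y : S, c x y = c y x := by
  intro g f
  set a := g with ha
  set b := g with hb
  set c2 := g with hc2
  set d := g with hd
  set e := g with he
  set h := g with hh
  set i := g with hi
  have H : o (c a c2) (c b (c (o (c g f) h) (o (o d e) i)))
         = o (c a c2) (c b (c (o (c f g) h) (o (o d e) i))) := by
    calc (o (c a c2) (c b (c (o (c g f) h) (o (o d e) i))))
      _ = (o (c a c2) (c (c b (o (c g f) h)) (o (o d e) i))) := by rw [← hc b (o (c g f) h) (o (o d e) i)]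
      _ = (c (o a (c b (o (c g f) h))) (o c2 (o (o d e) i))) := by rw [← hint a (c b (o (c g f) h)) c2 (o (o d e) i)]
      _ = (c (o a (c b (o (c g f) h))) (o c2 (o d (o e i)))) := by rw [ho d e i]
      _ = (c (o a (c b (o (c g f) h))) (o (o c2 d) (o e i))) := by rw [← ho c2 d (o e i)]
      _ = (o (c a (o c2 d)) (c (c b (o (c g f) h)) (o e i))) := by rw [hint a (c b (o (c g f) h)) (o c2 d) (o e i)]
      _ = (o (c a (o c2 d)) (c b (c (o (c g f) h) (o e i)))) := by rw [hc b (o (c g f) h) (o e i)]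
      _ = (o (c a (o c2 d)) (c b (o (c (c g f) e) (c h i)))) := by rw [hint (c g f) h e i]
      _ = (o (c a (o c2 d)) (c b (o (c g (c f e)) (c h i)))) := by rw [hc g f e]
      _ = (o (c a (o c2 d)) (c b (c (o g h) (o (c f e) i)))) := by rw [← hint g h (c f e) i]
      _ = (o (c a (o c2 d)) (c (c b (o g h)) (o (c f e) i))) := by rw [← hc b (o g h) (o (c f e) i)]
      _ = (c (o a (c b (o g h))) (o (o c2 d) (o (c f e) i))) := by rw [← hint a (c b (o g h)) (o c2 d) (o (c f e) i)]
      _ = (c (o a (c b (o g h))) (o c2 (o d (o (c f e) i)))) := by rw [ho c2 d (o (c f e) i)]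
      _ = (o (c a c2) (c (c b (o g h)) (o d (o (c f e) i)))) := by rw [hint a (c b (o g h)) c2 (o d (o (c f e) i))]
      _ = (o (c a c2) (c b (c (o g h) (o d (o (c f e) i))))) := by rw [hc b (o g h) (o d (o (c f e) i))]
      _ = (c (o a b) (o c2 (c (o g h) (o d (o (c f e) i))))) := by rw [← hint a b c2 (c (o g h) (o d (o (c f e) i)))]
      _ = (c (o a b) (o c2 (o (c g d) (c h (o (c f e) i))))) := by rw [hint g h d (o (c f e) i)]
      _ = (c (o a b) (o (o c2 (c g d)) (c h (o (c f e) i)))) := by rw [← ho c2 (c g d) (c h (o (c f e) i))]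
      _ = (o (c a (o c2 (c g d))) (c b (c h (o (c f e) i)))) := by rw [hint a b (o c2 (c g d)) (c h (o (c f e) i))]
      _ = (o (c a (o c2 (c g d))) (c (c b h) (o (c f e) i))) := by rw [← hc b h (o (c f e) i)]
      _ = (c (o a (c b h)) (o (o c2 (c g d)) (o (c f e) i))) := by rw [← hint a (c b h) (o c2 (c g d)) (o (c f e) i)]
      _ = (c (o a (c b h)) (o (o (o c2 (c g d)) (c f e)) i)) := by rw [← ho (o c2 (c g d)) (c f e) i]
      _ = (o (c a (o (o c2 (c g d)) (c f e))) (c (c b h) i)) := by rw [hint a (c b h) (o (o c2 (c g d)) (c f e)) i]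
      _ = (o (c a (o (o c2 (c g d)) (c f e))) (c b (c h i))) := by rw [hc b h i]
      _ = (c (o a b) (o (o (o c2 (c g d)) (c f e)) (c h i))) := by rw [← hint a b (o (o c2 (c g d)) (c f e)) (c h i)]
      _ = (c (o a b) (o (o c2 (c g d)) (o (c f e) (c h i)))) := by rw [ho (o c2 (c g d)) (c f e) (c h i)]
      _ = (o (c a (o c2 (c g d))) (c b (o (c f e) (c h i)))) := by rw [hint a b (o c2 (c g d)) (o (c f e) (c h i))]
      _ = (o (c a (o c2 (c g d))) (c b (c (o f h) (o e i)))) := by rw [← hint f h e i]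
      _ = (o (c a (o c2 (c g d))) (c (c b (o f h)) (o e i))) := by rw [← hc b (o f h) (o e i)]
      _ = (c (o a (c b (o f h))) (o (o c2 (c g d)) (o e i))) := by rw [← hint a (c b (o f h)) (o c2 (c g d)) (o e i)]
      _ = (c (o a (c b (o f h))) (o c2 (o (c g d) (o e i)))) := by rw [ho c2 (c g d) (o e i)]
      _ = (o (c a c2) (c (c b (o f h)) (o (c g d) (o e i)))) := by rw [hint a (c b (o f h)) c2 (o (c g d) (o e i))]
      _ = (o (c a c2) (c b (c (o f h) (o (c g d) (o e i))))) := by rw [hc b (o f h) (o (c g d) (o e i))]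
      _ = (o (c a c2) (c b (o (c f (c g d)) (c h (o e i))))) := by rw [hint f h (c g d) (o e i)]
      _ = (o (c a c2) (c b (o (c (c f g) d) (c h (o e i))))) := by rw [← hc f g d]
      _ = (o (c a c2) (c b (c (o (c f g) h) (o d (o e i))))) := by rw [← hint (c f g) h d (o e i)]
      _ = (o (c a c2) (c b (c (o (c f g) h) (o (o d e) i)))) := by rw [← ho d e i]
  have H1 := holeft _ _ _ H
  have H2 := hcleft _ _ _ H1
  have H3 := hcright _ _ _ H2
  exact horight _ _ _ H3

theorem double_cancellative_semigroup_commutative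
    {S : Type*} (o c : S → S → S)
    (ho : ∀ a b d : S, o (o a b) d = o a (o b d))
    (hc : ∀ a b d : S, c (c a b) d = c a (c b d))
    (hint : ∀ a b x y : S, c (o a b) (o x y) = o (c a x) (c b y))
    (holeft : ∀ a b d : S, o a b = o a d → b = d)
    (horight : ∀ a b d : S, o b a = o d a → b = d)
    (hcleft : ∀ a b d : S, c a b = c a d → b = d)
    (hcright : ∀ a b d : S, c b a = c d a → b = d) :
    (∀ a b : S, o a b = o b a) ∧ (∀ a b : S, c a b = c b a) := by
  constructor
  · exact dcs_key c o hc ho (fun a b x y => (hint a x b y).symm)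
      hcleft hcright holeft horight
  · exact dcs_key o c ho hc hint holeft horight hcleft hcright
end

section
/- Let S be a set with two associative binary operations ⊙ and ⊚ satisfying the middle-four interchange law, and suppose both operations are left and right cancellative. Then the two operations coincide: a⊙b = a⊚b for all a,b ∈ S. -/
theorem double_cancellative_semigroup_improper
    {S : Type*} (o c : S → S → S)
    (ho : ∀ a b d : S, o (o a b) d = o a (o b d))
    (hc : ∀ a b d : S, c (c a b) d = c a (c b d))
    (hint : ∀ a b x y : S, c (o a b) (o x y) = o (c a x) (c b y))
    (holeft : ∀ a b d : S, o a b = o a d → b = d)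
    (horight : ∀ a b d : S, o b a = o d a → b = d)
    (hcleft : ∀ a b d : S, c a b = c a d → b = d)
    (hcright : ∀ a b d : S, c b a = c d a → b = d) :
    ∀ a b : S, o a b = c a b := by
  intro a b
  have h1 : (c a (c b a)) = (c (c a b) a) := (hc a b a).symm
  have h2 : (o a (o a a)) = (o (o a a) a) := (ho a a a).symm
  have h3 : (c (o a a) (c b a)) = (c (c (o a a) b) a) := (hc (o a a) b a).symm
  have h4 : (c (o (o a a) (c a b)) (o a a)) = (c (o a (c (o a a) b)) (o a a)) := ((((((((hint (o a a) (c a b) a a).symm).symm.trans ((congrArg₂ o rfl h1)).symm).trans ((hint (o a a) a a (c b a))).symm).trans ((congrArg₂ c h2 rfl)).symm).trans ((hint a (o a a) a (c b a)).symm).symm).trans (congrArg₂ o rfl h3)).trans (hint a (c (o a a) b) a a).symm)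
  have h5 : (o (c a a) (o b a)) = (o (o (c a a) b) a) := (ho (c a a) b a).symm
  have h6 : (c a (c a (o a b))) = (c (c a a) (o a b)) := (hc a a (o a b)).symm
  have h7 : (o a (o b a)) = (o (o a b) a) := (ho a b a).symm
  have h8 : (c a (c a a)) = (c (c a a) a) := (hc a a a).symm
  have h9 : (c (o a a) (o (c a (o a b)) a)) = (c (o a a) (o (c a a) (o b a))) := (((((((hint a a (c a (o a b)) a).trans (congrArg₂ o h6 rfl)).trans ((hint (c a a) a (o a b) a)).symm).trans ((congrArg₂ c rfl h7)).symm).trans ((hint (c a a) a a (o b a)).symm).symm).trans ((congrArg₂ o h8 rfl)).symm).trans ((hint a a (c a a) (o b a))).symm)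
  have h10 : (o (c a a) (o b a)) = (o (c a (o a b)) a) := ((hcleft (o a a) (o (c a (o a b)) a) (o (c a a) (o b a)) (h9.trans (congrArg₂ c (rfl).symm rfl)))).symm
  have h11 : (o a (o a b)) = (o (o a a) b) := (ho a a b).symm
  have h12 : (c a (c a b)) = (c (c a a) b) := (hc a a b).symm
  have h13 : (o a (o a (c a b))) = (o (o a a) (c a b)) := (ho a a (c a b)).symm
  have h14 : (c (o a a) (o a (c a (o a b)))) = (c (o a a) (o a (o a (c a b)))) := ((((((((hint a a a (c a (o a b))).trans (congrArg₂ o rfl h6)).trans (hint a (c a a) a (o a b)).symm).trans (congrArg₂ c rfl h11)).trans ((hint a (c a a) (o a a) b).symm).symm).trans ((congrArg₂ o rfl h12)).symm).trans ((hint a a (o a a) (c a b))).symm).trans ((congrArg₂ c rfl h13)).symm)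
  have h15 : (o a (o a (c a b))) = (o a (c a (o a b))) := ((hcleft (o a a) (o a (c a (o a b))) (o a (o a (c a b))) (h14.trans (congrArg₂ c (rfl).symm rfl)))).symm
  have h16 : (o a (o a (c a b))) = (o a (c (o a a) b)) := ((ho a a (c a b)).symm.trans (hcright (o a a) (o (o a a) (c a b)) (o a (c (o a a) b)) (h4.trans (congrArg₂ c rfl (rfl).symm))))
  have h17 : (o (o a (o (c a a) b)) a) = (o (o a (c (o a a) b)) a) := (((((((ho a (o (c a a) b) a).symm).symm.trans ((congrArg₂ o rfl h5)).symm).trans (congrArg₂ o rfl h10)).trans (ho a (c a (o a b)) a).symm).trans ((congrArg₂ o h15 rfl)).symm).trans (congrArg₂ o h16 rfl))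
  have h18 : (o a (o (c a a) b)) = (o (o a (c a a)) b) := (ho a (c a a) b).symm
  have h19 : (c a (c a (o a a))) = (c (c a a) (o a a)) := (hc a a (o a a)).symm
  have h20 : (o a (o a (c a a))) = (o (o a a) (c a a)) := (ho a a (c a a)).symm
  have h21 : (c (o a a) (o a (c a (o a a)))) = (c (o a a) (o a (o a (c a a)))) := ((((((((hint a a a (c a (o a a))).trans (congrArg₂ o rfl h19)).trans (hint a (c a a) a (o a a)).symm).trans (congrArg₂ c rfl h2)).trans ((hint a (c a a) (o a a) a).symm).symm).trans ((congrArg₂ o rfl h8)).symm).trans ((hint a a (o a a) (c a a))).symm).trans ((congrArg₂ c rfl h20)).symm)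
  have h22 : (o a (o a (c a a))) = (o a (c a (o a a))) := ((hcleft (o a a) (o a (c a (o a a))) (o a (o a (c a a))) (h21.trans (congrArg₂ c (rfl).symm rfl)))).symm
  have h23 : (c (o a a) (o (c a (o a a)) b)) = (c (o a a) (o (c a a) (o a b))) := (((((((hint a a (c a (o a a)) b).trans (congrArg₂ o h19 rfl)).trans ((hint (c a a) a (o a a) b)).symm).trans ((congrArg₂ c rfl h11)).symm).trans ((hint (c a a) a a (o a b)).symm).symm).trans ((congrArg₂ o h8 rfl)).symm).trans ((hint a a (c a a) (o a b))).symm)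
  have h24 : (o (c a a) (o a b)) = (o (c a (o a a)) b) := ((hcleft (o a a) (o (c a (o a a)) b) (o (c a a) (o a b)) (h23.trans (congrArg₂ c (rfl).symm rfl)))).symm
  have h25 : (o a (o a (o (c a a) b))) = (o a (o (c a a) (o a b))) := (((((congrArg₂ o rfl h18).trans (ho a (o a (c a a)) b).symm).trans (congrArg₂ o h22 rfl)).trans ((ho a (c a (o a a)) b).symm).symm).trans ((congrArg₂ o rfl h24)).symm)
  have h26 : (o a (o a (c a b))) = (o (c a a) (o a b)) := ((((ho a a (c a b)).symm.trans (hcright (o a a) (o (o a a) (c a b)) (o a (c (o a a) b)) (h4.trans (congrArg₂ c rfl (rfl).symm)))).trans ((horight a (o a (o (c a a) b)) (o a (c (o a a) b)) (h17.trans (congrArg₂ o rfl (rfl).symm)))).symm).trans (holeft a (o a (o (c a a) b)) (o (c a a) (o a b)) (h25.trans (congrArg₂ o (rfl).symm rfl))))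
  have h27 : (o (c a a) (o a a)) = (o (o (c a a) a) a) := (ho (c a a) a a).symm
  have h28 : (o (c (c a a) (o a a)) (c a a)) = (o (c a (o (c a a) a)) (c a a)) := ((((((((hint (c a a) a (o a a) a)).symm.trans ((congrArg₂ c rfl h2)).symm).trans ((hint (c a a) a a (o a a)).symm).symm).trans ((congrArg₂ o h8 rfl)).symm).trans ((hint a a (c a a) (o a a))).symm).trans (congrArg₂ c rfl h27)).trans (hint a a (o (c a a) a) a))
  have h29 : (o (c a a) (c a (c a (o a a)))) = (o (c a a) (c a (o a (c a a)))) := ((((((((congrArg₂ o rfl h19).trans (hint a (c a a) a (o a a)).symm).trans (congrArg₂ c rfl h2)).trans ((hint a (c a a) (o a a) a).symm).symm).trans ((congrArg₂ o rfl h8)).symm).trans ((hint a a (o a a) (c a a))).symm).trans ((congrArg₂ c rfl h20)).symm).trans (hint a a a (o a (c a a))))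
  have h30 : (c a (o (c a a) a)) = (c a (o a (c a a))) := ((((horight (c a a) (c (c a a) (o a a)) (c a (o (c a a) a)) (h28.trans (congrArg₂ o rfl (rfl).symm)))).symm.trans ((hc a a (o a a)).symm).symm).trans (holeft (c a a) (c a (c a (o a a))) (c a (o a (c a a))) (h29.trans (congrArg₂ o (rfl).symm rfl))))
  have h31 : (o a (c a a)) = (o (c a a) a) := ((hcleft a (o (c a a) a) (o a (c a a)) (h30.trans (congrArg₂ c (rfl).symm rfl)))).symm
  have h32 : (o (c a a) (c a (c a (o a b)))) = (o (c a a) (c a (o a (c a b)))) := ((((((((congrArg₂ o rfl h6).trans (hint a (c a a) a (o a b)).symm).trans (congrArg₂ c rfl h11)).trans ((hint a (c a a) (o a a) b).symm).symm).trans ((congrArg₂ o rfl h12)).symm).trans ((hint a a (o a a) (c a b))).symm).trans ((congrArg₂ c rfl h13)).symm).trans (hint a a a (o a (c a b))))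
  have h33 : (c a (o a (c a b))) = (c a (c a (o a b))) := ((holeft (c a a) (c a (c a (o a b))) (c a (o a (c a b))) (h32.trans (congrArg₂ o (rfl).symm rfl)))).symm
  have h34 : (c a (o a b)) = (o a (c a b)) := ((hcleft a (o a (c a b)) (c a (o a b)) (h33.trans (congrArg₂ c (rfl).symm rfl)))).symm
  have h35 : (o (c a a) (c a (o a b))) = (o (c a (o a a)) (c a b)) := ((((hint a a a (o a b))).symm.trans (congrArg₂ c rfl h11)).trans (hint a a (o a a) b))
  have h36 : (o (o (c a a) (c a a)) (o a b)) = (o (o a (o a (c a a))) (c a b)) := (((((((((ho (c a a) (c a a) (o a b)).symm).symm.trans ((congrArg₂ o rfl h26)).symm).trans (ho (c a a) a (o a (c a b))).symm).trans ((congrArg₂ o h31 h34)).symm).trans ((ho a (c a a) (c a (o a b))).symm).symm).trans (congrArg₂ o rfl h35)).trans (ho a (c a (o a a)) (c a b)).symm).trans ((congrArg₂ o h22 rfl)).symm)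
  have h37 : (c a (o a (c a a))) = (c a (c a (o a a))) := ((holeft (c a a) (c a (c a (o a a))) (c a (o a (c a a))) (h29.trans (congrArg₂ o (rfl).symm rfl)))).symm
  have h38 : (o a (c a a)) = (c a (o a a)) := (hcleft a (o a (c a a)) (c a (o a a)) (h37.trans (congrArg₂ c (rfl).symm rfl)))
  have h39 : (c (o a a) (c a a)) = (c (c (o a a) a) a) := (hc (o a a) a a).symm
  have h40 : (c (o (o a a) (c a a)) (o a a)) = (c (o a (c (o a a) a)) (o a a)) := ((((((((hint (o a a) (c a a) a a).symm).symm.trans ((congrArg₂ o rfl h8)).symm).trans ((hint (o a a) a a (c a a))).symm).trans ((congrArg₂ c h2 rfl)).symm).trans ((hint a (o a a) a (c a a)).symm).symm).trans (congrArg₂ o rfl h39)).trans (hint a (c (o a a) a) a a).symm)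
  have h41 : (o a (c (o a a) a)) = (o a (o a (c a a))) := (((hcright (o a a) (o (o a a) (c a a)) (o a (c (o a a) a)) (h40.trans (congrArg₂ c rfl (rfl).symm)))).symm.trans ((ho a a (c a a)).symm).symm)
  have h42 : (c a (o a a)) = (c (o a a) a) := (((hcleft a (o a (c a a)) (c a (o a a)) (h37.trans (congrArg₂ c (rfl).symm rfl)))).symm.trans ((holeft a (c (o a a) a) (o a (c a a)) (h41.trans (congrArg₂ o (rfl).symm rfl)))).symm)
  have h43 : (o (c a a) (c (o a a) (o a a))) = (o (c a a) (o a (o a (c a a)))) := ((((((hint a (o a a) a (o a a)).symm.trans (congrArg₂ c rfl h2)).trans (hint a (o a a) (o a a) a)).trans ((congrArg₂ o h38 h42)).symm).trans (congrArg₂ o h31 (h38.symm))).trans ((ho (c a a) a (o a (c a a))).symm).symm)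
  have h44 : (o (c a a) (c a a)) = (o a (o a (c a a))) := (((hint a a a a)).symm.trans (holeft (c a a) (c (o a a) (o a a)) (o a (o a (c a a))) (h43.trans (congrArg₂ o (rfl).symm rfl))))
  have h45 : (o a b) = (c a b) := (holeft (o (c a a) (c a a)) (o a b) (c a b) (h36.trans (congrArg₂ o (h44).symm rfl)))
  exact h45
end

section
/- Let (S,⊙,⊚) be a double inverse semigroup. Then both operations are commutative: a⊙b = b⊙a and a⊚b = b⊚a for all a,b ∈ S. -/
section DISAux

variable {S : Type*}

/-- Kock's 3×3 identity: in a double semigroup, a surrounded ∘-pair can be swapped. -/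
private lemma dis_kock (o c : S → S → S)
    (ho : ∀ a b d : S, o (o a b) d = o a (o b d))
    (hc : ∀ a b d : S, c (c a b) d = c a (c b d))
    (hint : ∀ a b x y : S, c (o a b) (o x y) = o (c a x) (c b y))
    (u1 u2 u3 x y v1 v2 v3 a b : S) :
    c (o u1 (o u2 u3)) (c (o x (o (c a b) y)) (o v1 (o v2 v3))) =
    c (o u1 (o u2 u3)) (c (o x (o (c b a) y)) (o v1 (o v2 v3))) := by
  calc (c (o u1 (o u2 u3)) (c (o x (o (c a b) y)) (o v1 (o v2 v3))))
      _ = (c (c (o u1 (o u2 u3)) (o x (o (c a b) y))) (o v1 (o v2 v3))) := by rw [← hc (o u1 (o u2 u3)) (o x (o (c a b) y)) (o v1 (o v2 v3))]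
      _ = (c (o (c u1 x) (c (o u2 u3) (o (c a b) y))) (o v1 (o v2 v3))) := by rw [hint u1 (o u2 u3) x (o (c a b) y)]
      _ = (c (o (c u1 x) (o (c u2 (c a b)) (c u3 y))) (o v1 (o v2 v3))) := by rw [hint u2 u3 (c a b) y]
      _ = (c (o (o (c u1 x) (c u2 (c a b))) (c u3 y)) (o v1 (o v2 v3))) := by rw [← ho (c u1 x) (c u2 (c a b)) (c u3 y)]
      _ = (o (c (o (c u1 x) (c u2 (c a b))) v1) (c (c u3 y) (o v2 v3))) := by rw [hint (o (c u1 x) (c u2 (c a b))) (c u3 y) v1 (o v2 v3)]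
      _ = (o (c (o (c u1 x) (c (c u2 a) b)) v1) (c (c u3 y) (o v2 v3))) := by rw [← hc u2 a b]
      _ = (o (c (c (o u1 (c u2 a)) (o x b)) v1) (c (c u3 y) (o v2 v3))) := by rw [← hint u1 (c u2 a) x b]
      _ = (o (c (o u1 (c u2 a)) (c (o x b) v1)) (c (c u3 y) (o v2 v3))) := by rw [hc (o u1 (c u2 a)) (o x b) v1]
      _ = (c (o (o u1 (c u2 a)) (c u3 y)) (o (c (o x b) v1) (o v2 v3))) := by rw [← hint (o u1 (c u2 a)) (c u3 y) (c (o x b) v1) (o v2 v3)]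
      _ = (c (o u1 (o (c u2 a) (c u3 y))) (o (c (o x b) v1) (o v2 v3))) := by rw [ho u1 (c u2 a) (c u3 y)]
      _ = (o (c u1 (c (o x b) v1)) (c (o (c u2 a) (c u3 y)) (o v2 v3))) := by rw [hint u1 (o (c u2 a) (c u3 y)) (c (o x b) v1) (o v2 v3)]
      _ = (o (c (c u1 (o x b)) v1) (c (o (c u2 a) (c u3 y)) (o v2 v3))) := by rw [← hc u1 (o x b) v1]
      _ = (o (c (c u1 (o x b)) v1) (c (c (o u2 u3) (o a y)) (o v2 v3))) := by rw [← hint u2 u3 a y]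
      _ = (o (c (c u1 (o x b)) v1) (c (o u2 u3) (c (o a y) (o v2 v3)))) := by rw [hc (o u2 u3) (o a y) (o v2 v3)]
      _ = (c (o (c u1 (o x b)) (o u2 u3)) (o v1 (c (o a y) (o v2 v3)))) := by rw [← hint (c u1 (o x b)) (o u2 u3) v1 (c (o a y) (o v2 v3))]
      _ = (c (o (c u1 (o x b)) (o u2 u3)) (o v1 (o (c a v2) (c y v3)))) := by rw [hint a y v2 v3]
      _ = (c (o (c u1 (o x b)) (o u2 u3)) (o (o v1 (c a v2)) (c y v3))) := by rw [← ho v1 (c a v2) (c y v3)]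
      _ = (o (c (c u1 (o x b)) (o v1 (c a v2))) (c (o u2 u3) (c y v3))) := by rw [hint (c u1 (o x b)) (o u2 u3) (o v1 (c a v2)) (c y v3)]
      _ = (o (c u1 (c (o x b) (o v1 (c a v2)))) (c (o u2 u3) (c y v3))) := by rw [hc u1 (o x b) (o v1 (c a v2))]
      _ = (c (o u1 (o u2 u3)) (o (c (o x b) (o v1 (c a v2))) (c y v3))) := by rw [← hint u1 (o u2 u3) (c (o x b) (o v1 (c a v2))) (c y v3)]
      _ = (c (o u1 (o u2 u3)) (o (o (c x v1) (c b (c a v2))) (c y v3))) := by rw [hint x b v1 (c a v2)]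
      _ = (c (o u1 (o u2 u3)) (o (c x v1) (o (c b (c a v2)) (c y v3)))) := by rw [ho (c x v1) (c b (c a v2)) (c y v3)]
      _ = (c (o u1 (o u2 u3)) (o (c x v1) (o (c (c b a) v2) (c y v3)))) := by rw [← hc b a v2]
      _ = (c (o u1 (o u2 u3)) (o (c x v1) (c (o (c b a) y) (o v2 v3)))) := by rw [← hint (c b a) y v2 v3]
      _ = (c (o u1 (o u2 u3)) (c (o x (o (c b a) y)) (o v1 (o v2 v3)))) := by rw [← hint x (o (c b a) y) v1 (o v2 v3)]

/-- generic: double inverse of an element. -/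
private lemma dis_invinv (m : S → S → S) (i : S → S)
    (h1 : ∀ a : S, m (m a (i a)) a = a)
    (h2 : ∀ a : S, m (m (i a) a) (i a) = i a)
    (hu : ∀ a b : S, m (m a b) a = a → m (m b a) b = b → b = i a)
    (a : S) : i (i a) = a :=
  (hu (i a) a (h2 a) (h1 a)).symm

/-- generic: inverse of an idempotent is itself. -/
private lemma dis_ideminv (m : S → S → S) (i : S → S)
    (hu : ∀ a b : S, m (m a b) a = a → m (m b a) b = b → b = i a)
    {e : S} (he : m e e = e) : i e = e :=
  (hu e e (by rw [he, he]) (by rw [he, he])).symm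

/-- generic: a·a⁻¹ is idempotent -/
private lemma dis_canonidem (m : S → S → S) (i : S → S)
    (hm : ∀ a b d : S, m (m a b) d = m a (m b d))
    (h2 : ∀ a : S, m (m (i a) a) (i a) = i a)
    (a : S) : m (m a (i a)) (m a (i a)) = m a (i a) := by
  have h2' := h2 a
  simp only [hm] at h2'
  calc m (m a (i a)) (m a (i a)) = m a (m (i a) (m a (i a))) := by simp only [hm]
    _ = m a (i a) := by rw [h2']

/-- generic: a⁻¹·a is idempotent -/
private lemma dis_canonidem' (m : S → S → S) (i : S → S)
    (hm : ∀ a b d : S, m (m a b) d = m a (m b d))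
    (h1 : ∀ a : S, m (m a (i a)) a = a)
    (a : S) : m (m (i a) a) (m (i a) a) = m (i a) a := by
  have h1' := h1 a
  simp only [hm] at h1'
  calc m (m (i a) a) (m (i a) a) = m (i a) (m a (m (i a) a)) := by simp only [hm]
    _ = m (i a) a := by rw [h1']

/-- generic: product of idempotents is idempotent. -/
private lemma dis_idemmul (m : S → S → S) (i : S → S)
    (hm : ∀ a b d : S, m (m a b) d = m a (m b d))
    (h1 : ∀ a : S, m (m a (i a)) a = a)
    (h2 : ∀ a : S, m (m (i a) a) (i a) = i a)
    (hu : ∀ a b : S, m (m a b) a = a → m (m b a) b = b → b = i a)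
    {e f : S} (he : m e e = e) (hf : m f f = f) :
    m (m e f) (m e f) = m e f := by
  have hec : ∀ z, m e (m e z) = m e z := fun z => by rw [← hm e e z, he]
  have hfc : ∀ z, m f (m f z) = m f z := fun z => by rw [← hm f f z, hf]
  have A2r := h2 (m e f)
  simp only [hm] at A2r
  -- A2r : m (i (m e f)) (m e (m f (i (m e f)))) = i (m e f)
  have A1r := h1 (m e f)
  simp only [hm] at A1r
  -- A1r : m e (m f (m (i (m e f)) (m e f))) = m e f
  have hq : m (m f (m (i (m e f)) e)) (m f (m (i (m e f)) e)) = m f (m (i (m e f)) e) := by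
    calc m (m f (m (i (m e f)) e)) (m f (m (i (m e f)) e))
        = m f (m (i (m e f)) (m e (m f (m (i (m e f)) e)))) := by simp only [hm]
      _ = m f (m (m (i (m e f)) (m e (m f (i (m e f))))) e) := by simp only [hm]
      _ = m f (m (i (m e f)) e) := by rw [A2r]
  have hpqp : m (m (m e f) (m f (m (i (m e f)) e))) (m e f) = m e f := by
    calc m (m (m e f) (m f (m (i (m e f)) e))) (m e f)
        = m e (m f (m f (m (i (m e f)) (m e (m e f))))) := by simp only [hm]
      _ = m e (m f (m (i (m e f)) (m e f))) := by rw [hfc, hec]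
      _ = m e f := A1r
  have hqpq : m (m (m f (m (i (m e f)) e)) (m e f)) (m f (m (i (m e f)) e)) = m f (m (i (m e f)) e) := by
    calc m (m (m f (m (i (m e f)) e)) (m e f)) (m f (m (i (m e f)) e))
        = m f (m (i (m e f)) (m e (m e (m f (m f (m (i (m e f)) e)))))) := by simp only [hm]
      _ = m f (m (i (m e f)) (m e (m f (m (i (m e f)) e)))) := by rw [hec, hfc]
      _ = m f (m (m (i (m e f)) (m e (m f (i (m e f))))) e) := by simp only [hm]
      _ = m f (m (i (m e f)) e) := by rw [A2r]
  have hqip : m f (m (i (m e f)) e) = i (m e f) := hu (m e f) (m f (m (i (m e f)) e)) hpqp hqpq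
  have hiq : i (m f (m (i (m e f)) e)) = m f (m (i (m e f)) e) := dis_ideminv m i hu hq
  have h5 : i (i (m e f)) = m e f := dis_invinv m i h1 h2 hu (m e f)
  rw [← hqip] at h5
  rw [hiq] at h5
  -- h5 : m f (m (i (m e f)) e) = m e f
  rw [h5] at hq
  exact hq

/-- generic: idempotents commute. -/
private lemma dis_idemcomm (m : S → S → S) (i : S → S)
    (hm : ∀ a b d : S, m (m a b) d = m a (m b d))
    (h1 : ∀ a : S, m (m a (i a)) a = a)
    (h2 : ∀ a : S, m (m (i a) a) (i a) = i a)
    (hu : ∀ a b : S, m (m a b) a = a → m (m b a) b = b → b = i a)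
    {e f : S} (he : m e e = e) (hf : m f f = f) :
    m e f = m f e := by
  have hec : ∀ z, m e (m e z) = m e z := fun z => by rw [← hm e e z, he]
  have hfc : ∀ z, m f (m f z) = m f z := fun z => by rw [← hm f f z, hf]
  have hef := dis_idemmul m i hm h1 h2 hu he hf
  have hfe := dis_idemmul m i hm h1 h2 hu hf he
  have prem1 : m (m (m e f) (m f e)) (m e f) = m e f := by
    calc m (m (m e f) (m f e)) (m e f)
        = m e (m f (m f (m e (m e f)))) := by simp only [hm]
      _ = m e (m f (m e f)) := by rw [hfc, hec]
      _ = m (m e f) (m e f) := by simp only [hm]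
      _ = m e f := hef
  have prem2 : m (m (m f e) (m e f)) (m f e) = m f e := by
    calc m (m (m f e) (m e f)) (m f e)
        = m f (m e (m e (m f (m f e)))) := by simp only [hm]
      _ = m f (m e (m f e)) := by rw [hec, hfc]
      _ = m (m f e) (m f e) := by simp only [hm]
      _ = m f e := hfe
  have h := hu (m e f) (m f e) prem1 prem2
  exact (h.trans (dis_ideminv m i hu hef)).symm

/-- generic: anti-homomorphism property of the inverse. -/
private lemma dis_mulinv (m : S → S → S) (i : S → S)
    (hm : ∀ a b d : S, m (m a b) d = m a (m b d))
    (h1 : ∀ a : S, m (m a (i a)) a = a)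
    (h2 : ∀ a : S, m (m (i a) a) (i a) = i a)
    (hu : ∀ a b : S, m (m a b) a = a → m (m b a) b = b → b = i a)
    (p q : S) : i (m p q) = m (i q) (i p) := by
  have c1 : m (m q (i q)) (m (i p) p) = m (m (i p) p) (m q (i q)) :=
    dis_idemcomm m i hm h1 h2 hu (dis_canonidem m i hm h2 q) (dis_canonidem' m i hm h1 p)
  have prem1 : m (m (m p q) (m (i q) (i p))) (m p q) = m p q := by
    calc m (m (m p q) (m (i q) (i p))) (m p q)
        = m p (m (m (m q (i q)) (m (i p) p)) q) := by simp only [hm]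
      _ = m p (m (m (m (i p) p) (m q (i q))) q) := by rw [c1]
      _ = m (m (m p (i p)) p) (m (m q (i q)) q) := by simp only [hm]
      _ = m p q := by rw [h1 p, h1 q]
  have prem2 : m (m (m (i q) (i p)) (m p q)) (m (i q) (i p)) = m (i q) (i p) := by
    calc m (m (m (i q) (i p)) (m p q)) (m (i q) (i p))
        = m (i q) (m (m (m (i p) p) (m q (i q))) (i p)) := by simp only [hm]
      _ = m (i q) (m (m (m q (i q)) (m (i p) p)) (i p)) := by rw [← c1]
      _ = m (m (m (i q) q) (i q)) (m (m (i p) p) (i p)) := by simp only [hm]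
      _ = m (i q) (i p) := by rw [h2 q, h2 p]
  exact (hu (m p q) (m (i q) (i p)) prem1 prem2).symm

/-- oinv is a c-homomorphism. -/
private lemma dis_ochom (o c : S → S → S) (oinv : S → S)
    (hint : ∀ a b x y : S, c (o a b) (o x y) = o (c a x) (c b y))
    (hoi1 : ∀ a : S, o (o a (oinv a)) a = a)
    (hoi2 : ∀ a : S, o (o (oinv a) a) (oinv a) = oinv a)
    (houniq : ∀ a b : S, o (o a b) a = a → o (o b a) b = b → b = oinv a)
    (p q : S) : oinv (c p q) = c (oinv p) (oinv q) := by
  refine (houniq (c p q) (c (oinv p) (oinv q)) ?_ ?_).symm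
  · rw [← hint p (oinv p) q (oinv q), ← hint (o p (oinv p)) p (o q (oinv q)) q,
      hoi1 p, hoi1 q]
  · rw [← hint (oinv p) p (oinv q) q, ← hint (o (oinv p) p) (oinv p) (o (oinv q) q) (oinv q),
      hoi2 p, hoi2 q]

/-- the two inversions commute. -/
private lemma dis_oc_inv (o c : S → S → S) (oinv cinv : S → S)
    (hint : ∀ a b x y : S, c (o a b) (o x y) = o (c a x) (c b y))
    (hoi1 : ∀ a : S, o (o a (oinv a)) a = a)
    (hoi2 : ∀ a : S, o (o (oinv a) a) (oinv a) = oinv a)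
    (houniq : ∀ a b : S, o (o a b) a = a → o (o b a) b = b → b = oinv a)
    (hci1 : ∀ a : S, c (c a (cinv a)) a = a)
    (hci2 : ∀ a : S, c (c (cinv a) a) (cinv a) = cinv a)
    (hcuniq : ∀ a b : S, c (c a b) a = a → c (c b a) b = b → b = cinv a)
    (s : S) : oinv (cinv s) = cinv (oinv s) := by
  apply hcuniq (oinv s) (oinv (cinv s))
  · rw [← dis_ochom o c oinv hint hoi1 hoi2 houniq s (cinv s),
      ← dis_ochom o c oinv hint hoi1 hoi2 houniq (c s (cinv s)) s, hci1 s]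
  · rw [← dis_ochom o c oinv hint hoi1 hoi2 houniq (cinv s) s,
      ← dis_ochom o c oinv hint hoi1 hoi2 houniq (c (cinv s) s) (cinv s), hci2 s]

/-- transpose of a 3×3 grid. -/
private lemma dis_trans33 (o c : S → S → S)
    (hint : ∀ a b x y : S, c (o a b) (o x y) = o (c a x) (c b y))
    (p1 p2 p3 q1 q2 q3 r1 r2 r3 : S) :
    c (o p1 (o p2 p3)) (c (o q1 (o q2 q3)) (o r1 (o r2 r3))) =
    o (c p1 (c q1 r1)) (o (c p2 (c q2 r2)) (c p3 (c q3 r3))) := by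
  rw [hint q1 (o q2 q3) r1 (o r2 r3), hint q2 q3 r2 r3,
    hint p1 (o p2 p3) (c q1 r1) (o (c q2 r2) (c q3 r3)), hint p2 p3 (c q2 r2) (c q3 r3)]

end DISAux

section DISKey

variable {S : Type*}

/-- The key identity: cinv s is an o-idempotent-sandwich of cinv t, where s,t are the
two opposite c-products. -/
private lemma dis_key (o c : S → S → S) (oinv cinv : S → S)
    (ho : ∀ a b d : S, o (o a b) d = o a (o b d))
    (hc : ∀ a b d : S, c (c a b) d = c a (c b d))
    (hint : ∀ a b x y : S, c (o a b) (o x y) = o (c a x) (c b y))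
    (hoi1 : ∀ a : S, o (o a (oinv a)) a = a)
    (hoi2 : ∀ a : S, o (o (oinv a) a) (oinv a) = oinv a)
    (houniq : ∀ a b : S, o (o a b) a = a → o (o b a) b = b → b = oinv a)
    (hci1 : ∀ a : S, c (c a (cinv a)) a = a)
    (hci2 : ∀ a : S, c (c (cinv a) a) (cinv a) = cinv a)
    (hcuniq : ∀ a b : S, c (c a b) a = a → c (c b a) b = b → b = cinv a)
    (s t a b A B : S)
    (hsab : s = c a b) (htab : t = c b a)
    (hs : cinv s = c B A) (ht : cinv t = c A B) :
    cinv s = o (o (cinv s) (oinv (cinv s))) (o (cinv t) (o (oinv (cinv s)) (cinv s))) := by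
  have hL6 : oinv (cinv s) = cinv (oinv s) :=
    dis_oc_inv o c oinv cinv hint hoi1 hoi2 houniq hci1 hci2 hcuniq s
  have hP1 : o (cinv s) (o (oinv (cinv s)) (cinv s)) = cinv s := by
    rw [← ho (cinv s) (oinv (cinv s)) (cinv s), hoi1 (cinv s)]
  have hrow : o (o (cinv s) (oinv (cinv s))) (o (cinv s) (o (oinv (cinv s)) (cinv s))) = cinv s := by
    rw [hP1, hoi1 (cinv s)]
  have hs1 : o s (o (oinv s) s) = s := by rw [← ho s (oinv s) s, hoi1 s]
  have hs3 : o (o s (oinv s)) (o s (o (oinv s) s)) = s := by rw [hs1, hoi1 s]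
  -- first Kock application
  have k := dis_kock o c ho hc hint (o s (oinv s)) s (o (oinv s) s)
    (o (cinv s) (oinv (cinv s))) (o (oinv (cinv s)) (cinv s))
    (o s (oinv s)) s (o (oinv s) s) B A
  rw [hs3, ← hs, ← ht, hrow] at k
  -- k : c s (c (cinv s) s) = c s (c w s)
  have hciss : c s (c (cinv s) s) = s := by rw [← hc s (cinv s) s, hci1 s]
  have X1 : c (c s (o (o (cinv s) (oinv (cinv s))) (o (cinv t) (o (oinv (cinv s)) (cinv s))))) s = s := by
    rw [hc s (o (o (cinv s) (oinv (cinv s))) (o (cinv t) (o (oinv (cinv s)) (cinv s)))) s]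
    exact k.symm.trans hciss
  -- second Kock application
  have k2 := dis_kock o c ho hc hint
    (o (cinv s) (oinv (cinv s))) (cinv t) (o (oinv (cinv s)) (cinv s))
    (o s (oinv s)) (o (oinv s) s)
    (o (cinv s) (oinv (cinv s))) (cinv t) (o (oinv (cinv s)) (cinv s)) a b
  rw [← hsab, ← htab, hs3] at k2
  -- k2 : c w (c s w) = c w (c (o (o s (oinv s)) (o t (o (oinv s) s))) w)
  have tr := dis_trans33 o c hint
    (o (cinv s) (oinv (cinv s))) (cinv t) (o (oinv (cinv s)) (cinv s))
    (o s (oinv s)) t (o (oinv s) s)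
    (o (cinv s) (oinv (cinv s))) (cinv t) (o (oinv (cinv s)) (cinv s))
  have col1 : c (o (cinv s) (oinv (cinv s))) (c (o s (oinv s)) (o (cinv s) (oinv (cinv s)))) =
      o (cinv s) (oinv (cinv s)) := by
    rw [hint s (oinv s) (cinv s) (oinv (cinv s)),
      hint (cinv s) (oinv (cinv s)) (c s (cinv s)) (c (oinv s) (oinv (cinv s))),
      ← hc (cinv s) s (cinv s), hci2 s, hL6,
      ← hc (cinv (oinv s)) (oinv s) (cinv (oinv s)), hci2 (oinv s)]
  have col2 : c (cinv t) (c t (cinv t)) = cinv t := by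
    rw [← hc (cinv t) t (cinv t), hci2 t]
  have col3 : c (o (oinv (cinv s)) (cinv s)) (c (o (oinv s) s) (o (oinv (cinv s)) (cinv s))) =
      o (oinv (cinv s)) (cinv s) := by
    rw [hint (oinv s) s (oinv (cinv s)) (cinv s),
      hint (oinv (cinv s)) (cinv s) (c (oinv s) (oinv (cinv s))) (c s (cinv s)),
      ← hc (cinv s) s (cinv s), hci2 s, hL6,
      ← hc (cinv (oinv s)) (oinv s) (cinv (oinv s)), hci2 (oinv s)]
  have W0 : c (o (o (cinv s) (oinv (cinv s))) (o (cinv t) (o (oinv (cinv s)) (cinv s))))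
      (c s (o (o (cinv s) (oinv (cinv s))) (o (cinv t) (o (oinv (cinv s)) (cinv s))))) =
      o (o (cinv s) (oinv (cinv s))) (o (cinv t) (o (oinv (cinv s)) (cinv s))) := by
    rw [k2, tr, col1, col2, col3]
  have W : c (c (o (o (cinv s) (oinv (cinv s))) (o (cinv t) (o (oinv (cinv s)) (cinv s)))) s)
      (o (o (cinv s) (oinv (cinv s))) (o (cinv t) (o (oinv (cinv s)) (cinv s)))) =
      o (o (cinv s) (oinv (cinv s))) (o (cinv t) (o (oinv (cinv s)) (cinv s))) := by
    rw [hc (o (o (cinv s) (oinv (cinv s))) (o (cinv t) (o (oinv (cinv s)) (cinv s)))) s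
      (o (o (cinv s) (oinv (cinv s))) (o (cinv t) (o (oinv (cinv s)) (cinv s))))]
    exact W0
  exact (hcuniq s (o (o (cinv s) (oinv (cinv s))) (o (cinv t) (o (oinv (cinv s)) (cinv s)))) X1 W).symm

/-- abstract endgame: mutual idempotent sandwiches force equality. -/
private lemma dis_endgame (o : S → S → S)
    (ho : ∀ a b d : S, o (o a b) d = o a (o b d))
    (P Q α β γ δ : S)
    (hγγ : o γ γ = γ) (hδδ : o δ δ = δ)
    (hcomm1 : o γ α = o α γ) (hcomm2 : o β δ = o δ β)
    (k1 : P = o α (o Q β)) (k2 : Q = o γ (o P δ)) : Q = P := by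
  have h3 : P = o α (o (o γ (o P δ)) β) := by rw [← k2, ← k1]
  have h3n := h3
  simp only [ho] at h3n
  -- h3n : P = o α (o γ (o P (o δ β)))
  have hδc : ∀ z, o δ (o δ z) = o δ z := fun z => by rw [← ho δ δ z, hδδ]
  have hγc : ∀ z, o γ (o γ z) = o γ z := fun z => by rw [← ho γ γ z, hγγ]
  have hc1c : ∀ z, o γ (o α z) = o α (o γ z) := fun z => by rw [← ho γ α z, hcomm1, ho α γ z]
  have e1 : o γ (o P δ) = o γ (o (o α (o (o γ (o P δ)) β)) δ) := by
    conv_lhs => rw [h3]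
  calc Q = o γ (o P δ) := k2
    _ = o γ (o (o α (o (o γ (o P δ)) β)) δ) := e1
    _ = o γ (o α (o γ (o P (o δ (o β δ))))) := by simp only [ho]
    _ = o γ (o α (o γ (o P (o δ (o δ β))))) := by rw [hcomm2]
    _ = o γ (o α (o γ (o P (o δ β)))) := by rw [hδc]
    _ = o α (o γ (o γ (o P (o δ β)))) := by rw [hc1c]
    _ = o α (o γ (o P (o δ β))) := by rw [hγc]
    _ = P := h3n.symm

/-- master lemma: the second operation of a double inverse semigroup is commutative. -/
private lemma dis_master (o c : S → S → S) (oinv cinv : S → S)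
    (ho : ∀ a b d : S, o (o a b) d = o a (o b d))
    (hc : ∀ a b d : S, c (c a b) d = c a (c b d))
    (hint : ∀ a b x y : S, c (o a b) (o x y) = o (c a x) (c b y))
    (hoi1 : ∀ a : S, o (o a (oinv a)) a = a)
    (hoi2 : ∀ a : S, o (o (oinv a) a) (oinv a) = oinv a)
    (houniq : ∀ a b : S, o (o a b) a = a → o (o b a) b = b → b = oinv a)
    (hci1 : ∀ a : S, c (c a (cinv a)) a = a)
    (hci2 : ∀ a : S, c (c (cinv a) a) (cinv a) = cinv a)
    (hcuniq : ∀ a b : S, c (c a b) a = a → c (c b a) b = b → b = cinv a)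
    (a b : S) : c a b = c b a := by
  have anti : ∀ p q : S, cinv (c p q) = c (cinv q) (cinv p) :=
    fun p q => dis_mulinv c cinv hc hci1 hci2 hcuniq p q
  have k1 := dis_key o c oinv cinv ho hc hint hoi1 hoi2 houniq hci1 hci2 hcuniq
    (c a b) (c b a) a b (cinv a) (cinv b) rfl rfl (anti a b) (anti b a)
  have k2 := dis_key o c oinv cinv ho hc hint hoi1 hoi2 houniq hci1 hci2 hcuniq
    (c b a) (c a b) b a (cinv b) (cinv a) rfl rfl (anti b a) (anti a b)
  have hγγ := dis_canonidem o oinv ho hoi2 (cinv (c b a))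
  have hδδ := dis_canonidem' o oinv ho hoi1 (cinv (c b a))
  have hαα := dis_canonidem o oinv ho hoi2 (cinv (c a b))
  have hββ := dis_canonidem' o oinv ho hoi1 (cinv (c a b))
  have hcomm1 := dis_idemcomm o oinv ho hoi1 hoi2 houniq hγγ hαα
  have hcomm2 := dis_idemcomm o oinv ho hoi1 hoi2 houniq hββ hδδ
  have hQP := dis_endgame o ho (cinv (c a b)) (cinv (c b a))
    (o (cinv (c a b)) (oinv (cinv (c a b)))) (o (oinv (cinv (c a b))) (cinv (c a b)))
    (o (cinv (c b a)) (oinv (cinv (c b a)))) (o (oinv (cinv (c b a))) (cinv (c b a)))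
    hγγ hδδ hcomm1 hcomm2 k1 k2
  have hcc := congrArg cinv hQP
  rw [dis_invinv c cinv hci1 hci2 hcuniq (c b a), dis_invinv c cinv hci1 hci2 hcuniq (c a b)] at hcc
  exact hcc.symm

end DISKey

theorem double_inverse_semigroup_commutative
    {S : Type*} (o c : S → S → S) (oinv cinv : S → S)
    (ho : ∀ a b d : S, o (o a b) d = o a (o b d))
    (hc : ∀ a b d : S, c (c a b) d = c a (c b d))
    (hint : ∀ a b x y : S, c (o a b) (o x y) = o (c a x) (c b y))
    (hoi1 : ∀ a : S, o (o a (oinv a)) a = a)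
    (hoi2 : ∀ a : S, o (o (oinv a) a) (oinv a) = oinv a)
    (houniq : ∀ a b : S, o (o a b) a = a → o (o b a) b = b → b = oinv a)
    (hci1 : ∀ a : S, c (c a (cinv a)) a = a)
    (hci2 : ∀ a : S, c (c (cinv a) a) (cinv a) = cinv a)
    (hcuniq : ∀ a b : S, c (c a b) a = a → c (c b a) b = b → b = cinv a) :
    (∀ a b : S, o a b = o b a) ∧ (∀ a b : S, c a b = c b a) := by
  constructor
  · intro a b
    exact dis_master c o cinv oinv hc ho (fun p q x y => (hint p x q y).symm)
      hci1 hci2 hcuniq hoi1 hoi2 houniq a b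
  · intro a b
    exact dis_master o c oinv cinv ho hc hint hoi1 hoi2 houniq hci1 hci2 hcuniq a b
end

section
/- Let (S,⊙,⊚) be a double inverse semigroup. If a and b are elements that are idempotent for both operations (a⊙a = a = a⊚a and b⊙b = b = b⊚b), then a⊙b = a⊚b. -/
section Aux

variable {S : Type*}

private lemma inv_of_idem (m : S → S → S) (inv : S → S)
    (uniq : ∀ a b : S, m (m a b) a = a → m (m b a) b = b → b = inv a)
    {e : S} (he : m e e = e) : inv e = e :=
  (uniq e e (by rw [he, he]) (by rw [he, he])).symm

private lemma inv_inv' (m : S → S → S) (inv : S → S)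
    (i1 : ∀ a : S, m (m a (inv a)) a = a)
    (i2 : ∀ a : S, m (m (inv a) a) (inv a) = inv a)
    (uniq : ∀ a b : S, m (m a b) a = a → m (m b a) b = b → b = inv a)
    (a : S) : inv (inv a) = a :=
  (uniq (inv a) a (i2 a) (i1 a)).symm

private lemma mul_idem (m : S → S → S) (inv : S → S)
    (assoc : ∀ a b d : S, m (m a b) d = m a (m b d))
    (i1 : ∀ a : S, m (m a (inv a)) a = a)
    (i2 : ∀ a : S, m (m (inv a) a) (inv a) = inv a)
    (uniq : ∀ a b : S, m (m a b) a = a → m (m b a) b = b → b = inv a)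
    {e f : S} (he : m e e = e) (hf : m f f = f) :
    m (m e f) (m e f) = m e f := by
  set x := inv (m e f) with hxdef
  have hg1 : m (m e f) (m x (m e f)) = m e f := by
    have h := i1 (m e f); rwa [assoc] at h
  have hg2 : m x (m (m e f) x) = x := by
    have h := i2 (m e f); rwa [assoc] at h
  have hE : m (m f (m x e)) (m f (m x e)) = m f (m x e) := by
    calc m (m f (m x e)) (m f (m x e))
        = m f (m x (m e (m f (m x e)))) := by simp only [assoc]
      _ = m f (m x (m (m e f) (m x e))) := by rw [← assoc e f]
      _ = m f (m (m x (m (m e f) x)) e) := by simp only [assoc]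
      _ = m f (m x e) := by rw [hg2]
  have hC : m (m (m e f) (m f (m x e))) (m e f) = m e f := by
    calc m (m (m e f) (m f (m x e))) (m e f)
        = m e (m (m f f) (m x (m (m e e) f))) := by simp only [assoc]
      _ = m e (m f (m x (m e f))) := by rw [he, hf]
      _ = m (m e f) (m x (m e f)) := by rw [← assoc e f]
      _ = m e f := hg1
  have hD : m (m (m f (m x e)) (m e f)) (m f (m x e)) = m f (m x e) := by
    calc m (m (m f (m x e)) (m e f)) (m f (m x e))
        = m f (m x (m (m e e) (m (m f f) (m x e)))) := by simp only [assoc]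
      _ = m f (m x (m e (m f (m x e)))) := by rw [he, hf]
      _ = m f (m x (m (m e f) (m x e))) := by rw [← assoc e f]
      _ = m f (m (m x (m (m e f) x)) e) := by simp only [assoc]
      _ = m f (m x e) := by rw [hg2]
  have hyx : m f (m x e) = x := uniq (m e f) (m f (m x e)) hC hD
  have hxx : m x x = x := by rw [← hyx]; exact hE
  have h1 : m e f = x := by
    have h2 : inv x = x := inv_of_idem m inv uniq hxx
    rw [hxdef] at h2
    exact (inv_inv' m inv i1 i2 uniq (m e f)).symm.trans h2
  rw [h1, hxx]

private lemma idem_comm (m : S → S → S) (inv : S → S)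
    (assoc : ∀ a b d : S, m (m a b) d = m a (m b d))
    (i1 : ∀ a : S, m (m a (inv a)) a = a)
    (i2 : ∀ a : S, m (m (inv a) a) (inv a) = inv a)
    (uniq : ∀ a b : S, m (m a b) a = a → m (m b a) b = b → b = inv a)
    {e f : S} (he : m e e = e) (hf : m f f = f) :
    m e f = m f e := by
  have hp : m (m e f) (m e f) = m e f := mul_idem m inv assoc i1 i2 uniq he hf
  have hq : m (m f e) (m f e) = m f e := mul_idem m inv assoc i1 i2 uniq hf he
  have hC : m (m (m e f) (m f e)) (m e f) = m e f := by
    calc m (m (m e f) (m f e)) (m e f)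
        = m e (m (m f f) (m (m e e) f)) := by simp only [assoc]
      _ = m e (m f (m e f)) := by rw [he, hf]
      _ = m (m e f) (m e f) := by rw [← assoc e f]
      _ = m e f := hp
  have hD : m (m (m f e) (m e f)) (m f e) = m f e := by
    calc m (m (m f e) (m e f)) (m f e)
        = m f (m (m e e) (m (m f f) e)) := by simp only [assoc]
      _ = m f (m e (m f e)) := by rw [he, hf]
      _ = m (m f e) (m f e) := by rw [← assoc f e]
      _ = m f e := hq
  have h1 : m f e = inv (m e f) := uniq (m e f) (m f e) hC hD
  have h2 : inv (m e f) = m e f := inv_of_idem m inv uniq hp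
  rw [h1, h2]

end Aux

theorem double_inverse_semigroup_common_idempotents
    {S : Type*} (o c : S → S → S) (oinv cinv : S → S)
    (ho : ∀ a b d : S, o (o a b) d = o a (o b d))
    (hc : ∀ a b d : S, c (c a b) d = c a (c b d))
    (hint : ∀ a b x y : S, c (o a b) (o x y) = o (c a x) (c b y))
    (hoi1 : ∀ a : S, o (o a (oinv a)) a = a)
    (hoi2 : ∀ a : S, o (o (oinv a) a) (oinv a) = oinv a)
    (houniq : ∀ a b : S, o (o a b) a = a → o (o b a) b = b → b = oinv a)
    (hci1 : ∀ a : S, c (c a (cinv a)) a = a)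
    (hci2 : ∀ a : S, c (c (cinv a) a) (cinv a) = cinv a)
    (hcuniq : ∀ a b : S, c (c a b) a = a → c (c b a) b = b → b = cinv a)
    (a b : S)
    (ha : o a a = a ∧ c a a = a) (hb : o b b = b ∧ c b b = b) :
    o a b = c a b := by
  obtain ⟨hao, hac⟩ := ha
  obtain ⟨hbo, hbc⟩ := hb
  have ocomm : o a b = o b a := idem_comm o oinv ho hoi1 hoi2 houniq hao hbo
  have ccomm : c a b = c b a := idem_comm c cinv hc hci1 hci2 hcuniq hac hbc
  -- c-idempotency of o a b
  have hx : c (o a b) (o a b) = o a b := by rw [hint a b a b, hac, hbc]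
  -- o-idempotency of c a b
  have hy : o (c a b) (c a b) = c a b := by rw [← hint a a b b, hao, hbo]
  have e1 : o (o a b) a = o a b := by
    rw [ho a b a, ← ocomm, ← ho a a b, hao]
  have e2 : o (o a b) b = o a b := by rw [ho a b b, hbo]
  have e3 : o a (o a b) = o a b := by rw [← ho a a b, hao]
  have e4 : o b (o a b) = o a b := by rw [ocomm, ← ho b b a, hbo, ← ocomm]
  have f1 : c (c a b) a = c a b := by
    rw [hc a b a, ← ccomm, ← hc a a b, hac]
  have f2 : c (c a b) b = c a b := by rw [hc a b b, hbc]
  have f3 : c a (c a b) = c a b := by rw [← hc a a b, hac]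
  have f4 : c b (c a b) = c a b := by rw [ccomm, ← hc b b a, hbc, ← ccomm]
  have P1 : o (o a b) (c a b) = o a b := by
    have h := hint (o a b) a (o a b) b
    rw [hx, e1, e2, hx] at h
    exact h.symm
  have P2 : o (c a b) (o a b) = o a b := by
    have h := hint a (o a b) b (o a b)
    rw [e3, e4, hx] at h
    exact h.symm
  have P3 : c (o a b) (c a b) = c a b := by
    have h := hint a b (c a b) (c a b)
    rw [hy, f3, f4, hy] at h
    exact h
  have P4 : c (c a b) (o a b) = c a b := by
    have h := hint (c a b) (c a b) a b
    rw [hy, f1, f2, hy] at h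
    exact h
  have h := hint (o a b) (c a b) (c a b) (o a b)
  rw [P1, P2, P3, P4, hx, hy] at h
  exact h
end

section
/- Let (S,⊙,⊚) be a double inverse semigroup. Then the two operations coincide: a⊙b = a⊚b for all a,b ∈ S. -/
section DISAux
variable {S : Type*}

/-- inverse is involutive -/
theorem dis_inv_invol (m : S → S → S) (i : S → S)
    (ax1 : ∀ a, m (m a (i a)) a = a) (ax2 : ∀ a, m (m (i a) a) (i a) = i a)
    (uniq : ∀ a b, m (m a b) a = a → m (m b a) b = b → b = i a) (a : S) :
    i (i a) = a :=
  (uniq (i a) a (ax2 a) (ax1 a)).symm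

theorem dis_sand1 (m : S → S → S) (i : S → S)
    (assoc : ∀ a b d, m (m a b) d = m a (m b d))
    (ax1 : ∀ a, m (m a (i a)) a = a) (a : S) :
    m a (m (i a) a) = a := by rw [← assoc]; exact ax1 a

theorem dis_sand2 (m : S → S → S) (i : S → S)
    (assoc : ∀ a b d, m (m a b) d = m a (m b d))
    (ax2 : ∀ a, m (m (i a) a) (i a) = i a) (a : S) :
    m (i a) (m a (i a)) = i a := by rw [← assoc]; exact ax2 a

/-- an idempotent is its own inverse -/
theorem dis_idem_inv (m : S → S → S) (i : S → S)
    (uniq : ∀ a b, m (m a b) a = a → m (m b a) b = b → b = i a)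
    {e : S} (he : m e e = e) : i e = e := by
  have h : m (m e e) e = e := by rw [he, he]
  exact (uniq e e h h).symm

/-- e_a := a (i a) is idempotent -/
theorem dis_idem_e (m : S → S → S) (i : S → S)
    (assoc : ∀ a b d, m (m a b) d = m a (m b d))
    (ax1 : ∀ a, m (m a (i a)) a = a) (a : S) :
    m (m a (i a)) (m a (i a)) = m a (i a) := by
  rw [← assoc, ax1]

/-- r_a := (i a) a is idempotent -/
theorem dis_idem_r (m : S → S → S) (i : S → S)
    (assoc : ∀ a b d, m (m a b) d = m a (m b d))
    (ax2 : ∀ a, m (m (i a) a) (i a) = i a) (a : S) :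
    m (m (i a) a) (m (i a) a) = m (i a) a := by
  rw [← assoc, ax2]

/-- product of idempotents is idempotent -/
theorem dis_idem_mul (m : S → S → S) (i : S → S)
    (assoc : ∀ a b d, m (m a b) d = m a (m b d))
    (ax1 : ∀ a, m (m a (i a)) a = a) (ax2 : ∀ a, m (m (i a) a) (i a) = i a)
    (uniq : ∀ a b, m (m a b) a = a → m (m b a) b = b → b = i a)
    {e f : S} (he : m e e = e) (hf : m f f = f) :
    m (m e f) (m e f) = m e f := by
  set x := i (m e f) with hxdef
  have he' : ∀ t, m e (m e t) = m e t := fun t => by rw [← assoc, he]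
  have hf' : ∀ t, m f (m f t) = m f t := fun t => by rw [← assoc, hf]
  have axA' : m x (m e (m f x)) = x := by
    have h := ax2 (m e f); rw [← hxdef] at h
    simp only [assoc] at h; exact h
  have axB' : m e (m f (m x (m e f))) = m e f := by
    have h := ax1 (m e f); rw [← hxdef] at h
    simp only [assoc] at h; exact h
  -- x = (f x) e
  have h1 : m (m (m e f) (m (m f x) e)) (m e f) = m e f := by
    simp only [assoc]
    rw [hf', he', axB']
  have h2' : m x (m e (m f (m x e))) = m x e := by
    have h := congrArg (fun t => m t e) axA'
    simp only [assoc] at h; exact h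
  have h2 : m (m (m (m f x) e) (m e f)) (m (m f x) e) = m (m f x) e := by
    simp only [assoc]
    rw [he', hf', h2']
  have hx : m (m f x) e = x := uniq (m e f) (m (m f x) e) h1 h2
  have hx' : m f (m x e) = x := by rw [← assoc]; exact hx
  -- x is idempotent
  have hxx : m x x = x := by
    conv_lhs => rw [← hx]
    simp only [assoc]
    rw [h2']
    exact hx'
  have hix : i x = x := dis_idem_inv m i uniq hxx
  have : m e f = x := by
    have := dis_inv_invol m i ax1 ax2 uniq (m e f)
    rw [← hxdef] at this
    rw [← this, hix]
  rw [this]; exact hxx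

/-- idempotents commute -/
theorem dis_idem_comm (m : S → S → S) (i : S → S)
    (assoc : ∀ a b d, m (m a b) d = m a (m b d))
    (ax1 : ∀ a, m (m a (i a)) a = a) (ax2 : ∀ a, m (m (i a) a) (i a) = i a)
    (uniq : ∀ a b, m (m a b) a = a → m (m b a) b = b → b = i a)
    {e f : S} (he : m e e = e) (hf : m f f = f) :
    m e f = m f e := by
  have he' : ∀ t, m e (m e t) = m e t := fun t => by rw [← assoc, he]
  have hf' : ∀ t, m f (m f t) = m f t := fun t => by rw [← assoc, hf]
  have hef : m (m e f) (m e f) = m e f := dis_idem_mul m i assoc ax1 ax2 uniq he hf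
  have hfe : m (m f e) (m f e) = m f e := dis_idem_mul m i assoc ax1 ax2 uniq hf he
  have hef' : m e (m f (m e f)) = m e f := by
    have := hef; simp only [assoc] at this; exact this
  have hfe' : m f (m e (m f e)) = m f e := by
    have := hfe; simp only [assoc] at this; exact this
  have p1 : m (m (m e f) (m f e)) (m e f) = m e f := by
    simp only [assoc]; rw [hf', he', hef']
  have p2 : m (m (m f e) (m e f)) (m f e) = m f e := by
    simp only [assoc]; rw [he', hf', hfe']
  have h := uniq (m e f) (m f e) p1 p2
  rw [h, dis_idem_inv m i uniq hef]

/-- inverse anti-homomorphism -/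
theorem dis_inv_mul (m : S → S → S) (i : S → S)
    (assoc : ∀ a b d, m (m a b) d = m a (m b d))
    (ax1 : ∀ a, m (m a (i a)) a = a) (ax2 : ∀ a, m (m (i a) a) (i a) = i a)
    (uniq : ∀ a b, m (m a b) a = a → m (m b a) b = b → b = i a)
    (a b : S) : i (m a b) = m (i b) (i a) := by
  have hcomm : m (m b (i b)) (m (i a) a) = m (m (i a) a) (m b (i b)) :=
    dis_idem_comm m i assoc ax1 ax2 uniq (dis_idem_e m i assoc ax1 b)
      (dis_idem_r m i assoc ax2 a)
  have p1 : m (m (m a b) (m (i b) (i a))) (m a b) = m a b := by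
    calc m (m (m a b) (m (i b) (i a))) (m a b)
        = m a (m (m (m b (i b)) (m (i a) a)) b) := by simp only [assoc]
      _ = m a (m (m (m (i a) a) (m b (i b))) b) := by rw [hcomm]
      _ = m (m a (m (i a) a)) (m (m b (i b)) b) := by simp only [assoc]
      _ = m a b := by rw [dis_sand1 m i assoc ax1, ax1]
  have p2 : m (m (m (i b) (i a)) (m a b)) (m (i b) (i a)) = m (i b) (i a) := by
    calc m (m (m (i b) (i a)) (m a b)) (m (i b) (i a))
        = m (i b) (m (m (m (i a) a) (m b (i b))) (i a)) := by simp only [assoc]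
      _ = m (i b) (m (m (m b (i b)) (m (i a) a)) (i a)) := by rw [← hcomm]
      _ = m (m (i b) (m b (i b))) (m (m (i a) a) (i a)) := by simp only [assoc]
      _ = m (i b) (i a) := by rw [dis_sand2 m i assoc ax2, ax2]
  exact (uniq (m a b) (m (i b) (i a)) p1 p2).symm

end DISAux

section DISAux2
variable {S : Type*}

/-- cinv distributes over o-products -/
theorem dis_cinv_o (o c : S → S → S) (cinv : S → S)
    (hint : ∀ a b x y : S, c (o a b) (o x y) = o (c a x) (c b y))
    (hci1 : ∀ a : S, c (c a (cinv a)) a = a)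
    (hci2 : ∀ a : S, c (c (cinv a) a) (cinv a) = cinv a)
    (hcuniq : ∀ a b : S, c (c a b) a = a → c (c b a) b = b → b = cinv a)
    (a b : S) : cinv (o a b) = o (cinv a) (cinv b) := by
  have p1 : c (c (o a b) (o (cinv a) (cinv b))) (o a b) = o a b := by
    rw [hint, hint, hci1, hci1]
  have p2 : c (c (o (cinv a) (cinv b)) (o a b)) (o (cinv a) (cinv b)) =
      o (cinv a) (cinv b) := by
    rw [hint, hint, hci2, hci2]
  exact (hcuniq (o a b) (o (cinv a) (cinv b)) p1 p2).symm

/-- the two inverses commute -/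
theorem dis_inv_swap (o c : S → S → S) (oinv cinv : S → S)
    (hint : ∀ a b x y : S, c (o a b) (o x y) = o (c a x) (c b y))
    (hoi1 : ∀ a : S, o (o a (oinv a)) a = a)
    (hoi2 : ∀ a : S, o (o (oinv a) a) (oinv a) = oinv a)
    (houniq : ∀ a b : S, o (o a b) a = a → o (o b a) b = b → b = oinv a)
    (hci1 : ∀ a : S, c (c a (cinv a)) a = a)
    (hci2 : ∀ a : S, c (c (cinv a) a) (cinv a) = cinv a)
    (hcuniq : ∀ a b : S, c (c a b) a = a → c (c b a) b = b → b = cinv a)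
    (a : S) : cinv (oinv a) = oinv (cinv a) := by
  have hd := dis_cinv_o o c cinv hint hci1 hci2 hcuniq
  have p1 : o (o (cinv a) (cinv (oinv a))) (cinv a) = cinv a := by
    rw [← hd a (oinv a), ← hd (o a (oinv a)) a, hoi1]
  have p2 : o (o (cinv (oinv a)) (cinv a)) (cinv (oinv a)) = cinv (oinv a) := by
    rw [← hd (oinv a) a, ← hd (o (oinv a) a) (oinv a), hoi2]
  exact houniq (cinv a) (cinv (oinv a)) p1 p2

/-- on elements idempotent for both operations, the two products agree -/
theorem dis_B (o c : S → S → S) (oinv cinv : S → S)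
    (ho : ∀ a b d : S, o (o a b) d = o a (o b d))
    (hc : ∀ a b d : S, c (c a b) d = c a (c b d))
    (hint : ∀ a b x y : S, c (o a b) (o x y) = o (c a x) (c b y))
    (hoi1 : ∀ a : S, o (o a (oinv a)) a = a)
    (hoi2 : ∀ a : S, o (o (oinv a) a) (oinv a) = oinv a)
    (houniq : ∀ a b : S, o (o a b) a = a → o (o b a) b = b → b = oinv a)
    (hci1 : ∀ a : S, c (c a (cinv a)) a = a)
    (hci2 : ∀ a : S, c (c (cinv a) a) (cinv a) = cinv a)
    (hcuniq : ∀ a b : S, c (c a b) a = a → c (c b a) b = b → b = cinv a)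
    {p q : S} (hpo : o p p = p) (hpc : c p p = p)
    (hqo : o q q = q) (hqc : c q q = q) :
    o p q = c p q := by
  -- o p q is c-idempotent
  have h1 : c (o p q) (o p q) = o p q := by rw [hint, hpc, hqc]
  -- c p q is o-idempotent
  have h2 : o (c p q) (c p q) = c p q := by rw [← hint, hpo, hqo]
  have hoc : o p q = o q p :=
    dis_idem_comm o oinv ho hoi1 hoi2 houniq hpo hqo
  have hcc : c p q = c q p :=
    dis_idem_comm c cinv hc hci1 hci2 hcuniq hpc hqc
  have key : c (o p q) (o q p) = o (c p q) (c q p) := hint p q q p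
  rw [← hoc, h1, ← hcc, h2] at key
  exact key

end DISAux2
section DISAux3
variable {S : Type*}

/-- every o-idempotent is a c-idempotent and self-c-inverse -/
theorem dis_S1 (o c : S → S → S) (oinv cinv : S → S)
    (ho : ∀ a b d : S, o (o a b) d = o a (o b d))
    (hc : ∀ a b d : S, c (c a b) d = c a (c b d))
    (hint : ∀ a b x y : S, c (o a b) (o x y) = o (c a x) (c b y))
    (hoi1 : ∀ a : S, o (o a (oinv a)) a = a)
    (hoi2 : ∀ a : S, o (o (oinv a) a) (oinv a) = oinv a)
    (houniq : ∀ a b : S, o (o a b) a = a → o (o b a) b = b → b = oinv a)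
    (hci1 : ∀ a : S, c (c a (cinv a)) a = a)
    (hci2 : ∀ a : S, c (c (cinv a) a) (cinv a) = cinv a)
    (hcuniq : ∀ a b : S, c (c a b) a = a → c (c b a) b = b → b = cinv a)
    {e : S} (he : o e e = e) : cinv e = e ∧ c e e = e := by
  -- ec is o-idempotent
  have hec : o (cinv e) (cinv e) = cinv e := by
    have h := dis_cinv_o o c cinv hint hci1 hci2 hcuniq e e
    rw [he] at h; exact h.symm
  -- f := c e (cinv e), g := c (cinv e) e are c-idempotent
  have hfc : c (c e (cinv e)) (c e (cinv e)) = c e (cinv e) := by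
    rw [hc, ← hc (cinv e) e (cinv e), hci2 e]
  have hgc : c (c (cinv e) e) (c (cinv e) e) = c (cinv e) e := by
    rw [hc, ← hc e (cinv e) e, hci1 e]
  -- f, g, u := c e e are o-idempotent
  have hfo : o (c e (cinv e)) (c e (cinv e)) = c e (cinv e) := by
    have h := hint e e (cinv e) (cinv e); rw [he, hec] at h; exact h.symm
  have hgo : o (c (cinv e) e) (c (cinv e) e) = c (cinv e) e := by
    have h := hint (cinv e) (cinv e) e e; rw [he, hec] at h; exact h.symm
  have huo : o (c e e) (c e e) = c e e := by
    have h := hint e e e e; rw [he] at h; exact h.symm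
  -- unit laws
  have hfe : c (c e (cinv e)) e = e := hci1 e
  have heg : c e (c (cinv e) e) = e := by rw [← hc, hci1]
  -- o f g agrees with c f g
  have hFB : o (c e (cinv e)) (c (cinv e) e) = c (c e (cinv e)) (c (cinv e) e) :=
    dis_B o c oinv cinv ho hc hint hoi1 hoi2 houniq hci1 hci2 hcuniq hfo hfc hgo hgc
  have hPo : o (o (c e (cinv e)) (c (cinv e) e)) (o (c e (cinv e)) (c (cinv e) e))
      = o (c e (cinv e)) (c (cinv e) e) :=
    dis_idem_mul o oinv ho hoi1 hoi2 houniq hfo hgo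
  have hfeo := dis_idem_mul o oinv ho hoi1 hoi2 houniq hfo he
  have hefo := dis_idem_mul o oinv ho hoi1 hoi2 houniq he hfo
  have heeco := dis_idem_mul o oinv ho hoi1 hoi2 houniq he hec
  have dist : ∀ a, o a a = a → ∀ x y, c a (o x y) = o (c a x) (c a y) := by
    intro a ha x y
    have h := hint a a x y; rw [ha] at h; exact h
  -- Instance (♠): e = o (o e (c e e)) (o (c (c e (cinv e)) (c (cinv e) e)) e)
  have s1 : c (o (c e (cinv e)) e) (o e (c (cinv e) e)) = e := by
    rw [hint, hfe, heg, he]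
  have s3 : c (o (c e (cinv e)) e) e = o e (c e e) := by
    have h := hint (c e (cinv e)) e e e; rw [he, hfe] at h; exact h
  have s4 : c (o (c e (cinv e)) e) (c (cinv e) e)
      = o (c (c e (cinv e)) (c (cinv e) e)) e := by
    have h := hint (c e (cinv e)) e (c (cinv e) e) (c (cinv e) e)
    rw [hgo, heg] at h; exact h
  have hA : e = o (o e (c e e)) (o (c (c e (cinv e)) (c (cinv e) e)) e) := by
    rw [← s3, ← s4, ← dist _ hfeo e (c (cinv e) e), s1]
  -- Instance (♣): o (c e e) (c f g) = o (o (c e e) e) (o e (c f g))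
  have t1 : c (o e (c e (cinv e))) (o e (c (cinv e) e))
      = o (c e e) (c (c e (cinv e)) (c (cinv e) e)) := by rw [hint]
  have t3 : c (o e (c e (cinv e))) e = o (c e e) e := by
    have h := hint e (c e (cinv e)) e e; rw [he, hfe] at h; exact h
  have t4 : c (o e (c e (cinv e))) (c (cinv e) e)
      = o e (c (c e (cinv e)) (c (cinv e) e)) := by
    have h := hint e (c e (cinv e)) (c (cinv e) e) (c (cinv e) e)
    rw [hgo, heg] at h; exact h
  have hB : o (c e e) (c (c e (cinv e)) (c (cinv e) e))
      = o (o (c e e) e) (o e (c (c e (cinv e)) (c (cinv e) e))) := by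
    rw [← t1, ← t3, ← t4, ← dist _ hefo e (c (cinv e) e)]
  -- Instance (1'): o f g = o (o f w) (o u g)
  have v1 : c (o e (cinv e)) (o (cinv e) e)
      = o (c e (cinv e)) (c (cinv e) e) := by rw [hint]
  have v3 : c (o e (cinv e)) (cinv e)
      = o (c e (cinv e)) (c (cinv e) (cinv e)) := by
    have h := hint e (cinv e) (cinv e) (cinv e); rw [hec] at h; exact h
  have v4 : c (o e (cinv e)) e = o (c e e) (c (cinv e) e) := by
    have h := hint e (cinv e) e e; rw [he] at h; exact h
  have hC : o (c e (cinv e)) (c (cinv e) e)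
      = o (o (c e (cinv e)) (c (cinv e) (cinv e)))
          (o (c e e) (c (cinv e) e)) := by
    rw [← v1, ← v3, ← v4, ← dist _ heeco (cinv e) e]
  -- rewrite c f g to o f g in hA hB
  rw [← hFB] at hA hB
  -- commutation facts
  have hcomm_gu : o (c (cinv e) e) (c e e) = o (c e e) (c (cinv e) e) :=
    dis_idem_comm o oinv ho hoi1 hoi2 houniq hgo huo
  have hcomm_uP : o (c e e) (o (c e (cinv e)) (c (cinv e) e))
      = o (o (c e (cinv e)) (c (cinv e) e)) (c e e) :=
    dis_idem_comm o oinv ho hoi1 hoi2 houniq huo hPo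
  have hcomm_Pe : o (o (c e (cinv e)) (c (cinv e) e)) e
      = o e (o (c e (cinv e)) (c (cinv e) e)) :=
    dis_idem_comm o oinv ho hoi1 hoi2 houniq hPo he
  have hcomm_eu : o e (c e e) = o (c e e) e :=
    dis_idem_comm o oinv ho hoi1 hoi2 houniq he huo
  have he' : ∀ t, o e (o e t) = o e t := fun t => by rw [← ho, he]
  have hu' : ∀ t, o (c e e) (o (c e e) t) = o (c e e) t := fun t => by rw [← ho, huo]
  -- P absorbs u on the right
  have hPu' : o (o (c e (cinv e)) (c (cinv e) e)) (c e e)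
      = o (c e (cinv e)) (c (cinv e) e) := by
    rw [hC]
    simp only [ho]
    rw [hcomm_gu, hu']
  have hPu : o (c e e) (o (c e (cinv e)) (c (cinv e) e))
      = o (c e (cinv e)) (c (cinv e) e) := by rw [hcomm_uP, hPu']
  have hP1 : o (c e (cinv e)) (c (cinv e) e)
      = o (o (c e e) e) (o e (o (c e (cinv e)) (c (cinv e) e))) := by
    conv_lhs => rw [← hPu]
    exact hB
  have hA2 : e = o e (o e (o (c e (cinv e)) (c (cinv e) e))) := by
    calc e = o (o e (c e e)) (o (o (c e (cinv e)) (c (cinv e) e)) e) := hA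
      _ = o e (o (o (c e e) (o (c e (cinv e)) (c (cinv e) e))) e) := by
          simp only [ho]
      _ = o e (o (o (c e (cinv e)) (c (cinv e) e)) e) := by rw [hPu]
      _ = o e (o e (o (c e (cinv e)) (c (cinv e) e))) := by rw [hcomm_Pe]
  have hEP : o e (o (c e (cinv e)) (c (cinv e) e)) = e := by
    rw [← he' (o (c e (cinv e)) (c (cinv e) e))]; exact hA2.symm
  have hP2 : o (c e (cinv e)) (c (cinv e) e) = o (c e e) e := by
    calc o (c e (cinv e)) (c (cinv e) e)
        = o (o (c e e) e) (o e (o (c e (cinv e)) (c (cinv e) e))) := hP1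
      _ = o (c e e) (o e (o e (o (c e (cinv e)) (c (cinv e) e)))) := by
          simp only [ho]
      _ = o (c e e) (o e (o (c e (cinv e)) (c (cinv e) e))) := by rw [he']
      _ = o (c e e) e := by rw [hEP]
  have hPe : e = o (c e (cinv e)) (c (cinv e) e) := by
    calc e = o e (o (c e (cinv e)) (c (cinv e) e)) := hEP.symm
      _ = o e (o (c e e) e) := by rw [hP2]
      _ = o (o e (c e e)) e := by rw [← ho]
      _ = o (o (c e e) e) e := by rw [hcomm_eu]
      _ = o (c e e) (o e e) := by rw [ho]
      _ = o (c e e) e := by rw [he]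
      _ = o (c e (cinv e)) (c (cinv e) e) := hP2.symm
  have hFe : c (c e (cinv e)) (c (cinv e) e) = e := by rw [← hFB]; exact hPe.symm
  -- cinv e = e
  have hinvf : cinv (c e (cinv e)) = c e (cinv e) := dis_idem_inv c cinv hcuniq hfc
  have hinvg : cinv (c (cinv e) e) = c (cinv e) e := dis_idem_inv c cinv hcuniq hgc
  have hccomm : c (c e (cinv e)) (c (cinv e) e) = c (c (cinv e) e) (c e (cinv e)) :=
    dis_idem_comm c cinv hc hci1 hci2 hcuniq hfc hgc
  have hcinv_e : cinv e = e := by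
    calc cinv e = cinv (c (c e (cinv e)) (c (cinv e) e)) := by rw [hFe]
      _ = c (cinv (c (cinv e) e)) (cinv (c e (cinv e))) :=
          dis_inv_mul c cinv hc hci1 hci2 hcuniq _ _
      _ = c (c (cinv e) e) (c e (cinv e)) := by rw [hinvf, hinvg]
      _ = c (c e (cinv e)) (c (cinv e) e) := hccomm.symm
      _ = e := hFe
  refine ⟨hcinv_e, ?_⟩
  -- c e e = e
  have hcuu : c (c e e) (c e e) = c e e := by
    have h := hfc; rw [hcinv_e] at h; exact h
  calc c e e = c (c e e) (c e e) := hcuu.symm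
    _ = c (c e (cinv e)) (c (cinv e) e) := by rw [hcinv_e]
    _ = e := hFe
end DISAux3
section DISAux4
variable {S : Type*}

/-- key lemma: for any o-idempotent e, c e x = o e x -/
theorem dis_Mleft (o c : S → S → S) (oinv cinv : S → S)
    (ho : ∀ a b d : S, o (o a b) d = o a (o b d))
    (hc : ∀ a b d : S, c (c a b) d = c a (c b d))
    (hint : ∀ a b x y : S, c (o a b) (o x y) = o (c a x) (c b y))
    (hoi1 : ∀ a : S, o (o a (oinv a)) a = a)
    (hoi2 : ∀ a : S, o (o (oinv a) a) (oinv a) = oinv a)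
    (houniq : ∀ a b : S, o (o a b) a = a → o (o b a) b = b → b = oinv a)
    (hci1 : ∀ a : S, c (c a (cinv a)) a = a)
    (hci2 : ∀ a : S, c (c (cinv a) a) (cinv a) = cinv a)
    (hcuniq : ∀ a b : S, c (c a b) a = a → c (c b a) b = b → b = cinv a)
    (e x : S) (he : o e e = e) : c e x = o e x := by
  have hint' : ∀ a b x y : S, o (c a b) (c x y) = c (o a x) (o b y) :=
    fun a b x y => (hint a x b y).symm
  -- swapped-S1 : c-idempotents are o-idempotents
  have S1c : ∀ {f : S}, c f f = f → oinv f = f ∧ o f f = f := fun hf =>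
    dis_S1 c o cinv oinv hc ho hint' hci1 hci2 hcuniq hoi1 hoi2 houniq hf
  have S1o : ∀ {f : S}, o f f = f → cinv f = f ∧ c f f = f := fun hf =>
    dis_S1 o c oinv cinv ho hc hint hoi1 hoi2 houniq hci1 hci2 hcuniq hf
  -- the four basic idempotents attached to x
  have hexo : o (o x (oinv x)) (o x (oinv x)) = o x (oinv x) :=
    dis_idem_e o oinv ho hoi1 x
  have hfxc : c (c x (cinv x)) (c x (cinv x)) = c x (cinv x) :=
    dis_idem_e c cinv hc hci1 x
  have hexc : c (o x (oinv x)) (o x (oinv x)) = o x (oinv x) := (S1o hexo).2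
  have hexinv : cinv (o x (oinv x)) = o x (oinv x) := (S1o hexo).1
  have hfxo : o (c x (cinv x)) (c x (cinv x)) = c x (cinv x) := (S1c hfxc).2
  -- C := o e_x f_x
  have hCo : o (o (o x (oinv x)) (c x (cinv x))) (o (o x (oinv x)) (c x (cinv x)))
      = o (o x (oinv x)) (c x (cinv x)) :=
    dis_idem_mul o oinv ho hoi1 hoi2 houniq hexo hfxo
  have hBexfx : o (o x (oinv x)) (c x (cinv x)) = c (o x (oinv x)) (c x (cinv x)) :=
    dis_B o c oinv cinv ho hc hint hoi1 hoi2 houniq hci1 hci2 hcuniq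
      hexo hexc hfxo hfxc
  have hCc : c (o (o x (oinv x)) (c x (cinv x))) (o (o x (oinv x)) (c x (cinv x)))
      = o (o x (oinv x)) (c x (cinv x)) := by
    rw [hBexfx]
    exact dis_idem_mul c cinv hc hci1 hci2 hcuniq hexc hfxc
  have hec : c e e = e := (S1o he).2
  -- e' := o e C
  have he'o : o (o e (o (o x (oinv x)) (c x (cinv x))))
      (o e (o (o x (oinv x)) (c x (cinv x))))
      = o e (o (o x (oinv x)) (c x (cinv x))) :=
    dis_idem_mul o oinv ho hoi1 hoi2 houniq he hCo
  have hBeC : o e (o (o x (oinv x)) (c x (cinv x)))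
      = c e (o (o x (oinv x)) (c x (cinv x))) :=
    dis_B o c oinv cinv ho hc hint hoi1 hoi2 houniq hci1 hci2 hcuniq
      he hec hCo hCc
  have he'c : c (o e (o (o x (oinv x)) (c x (cinv x))))
      (o e (o (o x (oinv x)) (c x (cinv x))))
      = o e (o (o x (oinv x)) (c x (cinv x))) := by
    rw [hBeC]
    exact dis_idem_mul c cinv hc hci1 hci2 hcuniq hec hCc
  have he'cinv : cinv (o e (o (o x (oinv x)) (c x (cinv x))))
      = o e (o (o x (oinv x)) (c x (cinv x))) :=
    dis_idem_inv c cinv hcuniq he'c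
  -- absorptions
  have hcomm_fe : o (c x (cinv x)) (o x (oinv x)) = o (o x (oinv x)) (c x (cinv x)) :=
    dis_idem_comm o oinv ho hoi1 hoi2 houniq hfxo hexo
  have hCex : o (o (o x (oinv x)) (c x (cinv x))) (o x (oinv x))
      = o (o x (oinv x)) (c x (cinv x)) := by
    rw [ho, hcomm_fe, ← ho, hexo]
  have hCfx : o (o (o x (oinv x)) (c x (cinv x))) (c x (cinv x))
      = o (o x (oinv x)) (c x (cinv x)) := by
    rw [ho, hfxo]
  have he'C : o (o e (o (o x (oinv x)) (c x (cinv x))))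
      (o (o x (oinv x)) (c x (cinv x)))
      = o e (o (o x (oinv x)) (c x (cinv x))) := by
    rw [ho, hCo]
  have he'ex : o (o e (o (o x (oinv x)) (c x (cinv x)))) (o x (oinv x))
      = o e (o (o x (oinv x)) (c x (cinv x))) := by
    rw [ho, hCex]
  have he'fx : o (o e (o (o x (oinv x)) (c x (cinv x)))) (c x (cinv x))
      = o e (o (o x (oinv x)) (c x (cinv x))) := by
    rw [ho, hCfx]
  -- decompositions of x and cinv x
  have hxcdec : o (o x (oinv x)) (cinv x) = cinv x := by
    have h1 : o (cinv x) (oinv (cinv x)) = o x (oinv x) := by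
      rw [← dis_inv_swap o c oinv cinv hint hoi1 hoi2 houniq hci1 hci2 hcuniq x,
        ← dis_cinv_o o c cinv hint hci1 hci2 hcuniq x (oinv x), hexinv]
    have h2 := hoi1 (cinv x)
    rw [h1] at h2; exact h2
  have hfxx : c (c x (cinv x)) x = x := hci1 x
  -- U1 : c C x = x
  have U1 : c (o (o x (oinv x)) (c x (cinv x))) x = x := by
    have h := hint (o x (oinv x)) (c x (cinv x)) (o x (oinv x)) x
    rw [hoi1 x, hexc, hfxx, hoi1 x] at h
    exact h
  -- V1 : o C x = x
  have V1 : o (o (o x (oinv x)) (c x (cinv x))) x = x := by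
    have hBfxex : o (c x (cinv x)) (o x (oinv x)) = c (c x (cinv x)) (o x (oinv x)) :=
      dis_B o c oinv cinv ho hc hint hoi1 hoi2 houniq hci1 hci2 hcuniq
        hfxo hfxc hexo hexc
    have h := hint (c x (cinv x)) (c x (cinv x)) (o x (oinv x)) x
    rw [hfxo, hoi1 x, hfxx, ← hBfxex, hcomm_fe] at h
    exact h.symm
  -- the uniqueness argument
  have step1 : c (o (o e (o (o x (oinv x)) (c x (cinv x)))) x) (cinv x)
      = o e (o (o x (oinv x)) (c x (cinv x))) := by
    have hBe'ex : o (o e (o (o x (oinv x)) (c x (cinv x)))) (o x (oinv x))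
        = c (o e (o (o x (oinv x)) (c x (cinv x)))) (o x (oinv x)) :=
      dis_B o c oinv cinv ho hc hint hoi1 hoi2 houniq hci1 hci2 hcuniq
        he'o he'c hexo hexc
    have h := hint (o e (o (o x (oinv x)) (c x (cinv x)))) x (o x (oinv x)) (cinv x)
    rw [hxcdec, ← hBe'ex, he'ex, he'fx] at h
    exact h
  have hba : c (o (o e (o (o x (oinv x)) (c x (cinv x)))) x)
      (c (cinv x) (o e (o (o x (oinv x)) (c x (cinv x)))))
      = o e (o (o x (oinv x)) (c x (cinv x))) := by
    rw [← hc, step1, he'c]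
  have p2 : c (c (o (o e (o (o x (oinv x)) (c x (cinv x)))) x)
      (c (cinv x) (o e (o (o x (oinv x)) (c x (cinv x))))))
      (o (o e (o (o x (oinv x)) (c x (cinv x)))) x)
      = o (o e (o (o x (oinv x)) (c x (cinv x)))) x := by
    rw [hba]
    have h := hint (o e (o (o x (oinv x)) (c x (cinv x))))
      (o (o x (oinv x)) (c x (cinv x)))
      (o e (o (o x (oinv x)) (c x (cinv x)))) x
    rw [he'C, he'c, U1] at h
    exact h
  have p1 : c (c (c (cinv x) (o e (o (o x (oinv x)) (c x (cinv x)))))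
      (o (o e (o (o x (oinv x)) (c x (cinv x)))) x))
      (c (cinv x) (o e (o (o x (oinv x)) (c x (cinv x)))))
      = c (cinv x) (o e (o (o x (oinv x)) (c x (cinv x)))) := by
    rw [hc (c (cinv x) (o e (o (o x (oinv x)) (c x (cinv x)))))
      (o (o e (o (o x (oinv x)) (c x (cinv x)))) x)
      (c (cinv x) (o e (o (o x (oinv x)) (c x (cinv x))))),
      hba, hc, he'c]
  have hM0 : o (o e (o (o x (oinv x)) (c x (cinv x)))) x
      = c (o e (o (o x (oinv x)) (c x (cinv x)))) x := by
    have h := hcuniq (c (cinv x) (o e (o (o x (oinv x)) (c x (cinv x)))))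
      (o (o e (o (o x (oinv x)) (c x (cinv x)))) x) p1 p2
    rw [dis_inv_mul c cinv hc hci1 hci2 hcuniq,
      dis_inv_invol c cinv hci1 hci2 hcuniq, he'cinv] at h
    exact h
  -- conclusion
  calc c e x = c e (c (o (o x (oinv x)) (c x (cinv x))) x) := by rw [U1]
    _ = c (c e (o (o x (oinv x)) (c x (cinv x)))) x := (hc _ _ _).symm
    _ = c (o e (o (o x (oinv x)) (c x (cinv x)))) x := by rw [hBeC]
    _ = o (o e (o (o x (oinv x)) (c x (cinv x)))) x := hM0.symm
    _ = o e (o (o (o x (oinv x)) (c x (cinv x))) x) := ho _ _ _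
    _ = o e x := by rw [V1]
end DISAux4
theorem double_inverse_semigroup_improper
    {S : Type*} (o c : S → S → S) (oinv cinv : S → S)
    (ho : ∀ a b d : S, o (o a b) d = o a (o b d))
    (hc : ∀ a b d : S, c (c a b) d = c a (c b d))
    (hint : ∀ a b x y : S, c (o a b) (o x y) = o (c a x) (c b y))
    (hoi1 : ∀ a : S, o (o a (oinv a)) a = a)
    (hoi2 : ∀ a : S, o (o (oinv a) a) (oinv a) = oinv a)
    (houniq : ∀ a b : S, o (o a b) a = a → o (o b a) b = b → b = oinv a)
    (hci1 : ∀ a : S, c (c a (cinv a)) a = a)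
    (hci2 : ∀ a : S, c (c (cinv a) a) (cinv a) = cinv a)
    (hcuniq : ∀ a b : S, c (c a b) a = a → c (c b a) b = b → b = cinv a) :
    ∀ a b : S, o a b = c a b := by
  intro a b
  have Mleft : ∀ e x : S, o e e = e → c e x = o e x := fun e x he =>
    dis_Mleft o c oinv cinv ho hc hint hoi1 hoi2 houniq hci1 hci2 hcuniq e x he
  -- mirrored structure gives the right-handed version
  have Mright : ∀ e x : S, o e e = e → c x e = o x e := by
    intro e x he
    exact dis_Mleft (fun p q => o q p) (fun p q => c q p) oinv cinv
      (fun p q d => (ho d q p).symm)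
      (fun p q d => (hc d q p).symm)
      (fun p q u v => hint v u q p)
      (fun p => dis_sand1 o oinv ho hoi1 p)
      (fun p => dis_sand2 o oinv ho hoi2 p)
      (fun p q h1 h2 => houniq p q (by rw [ho]; exact h1) (by rw [ho]; exact h2))
      (fun p => dis_sand1 c cinv hc hci1 p)
      (fun p => dis_sand2 c cinv hc hci2 p)
      (fun p q h1 h2 => hcuniq p q (by rw [hc]; exact h1) (by rw [hc]; exact h2))
      e x he
  have hra : o (o (oinv a) a) (o (oinv a) a) = o (oinv a) a :=
    dis_idem_r o oinv ho hoi2 a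
  have heb : o (o b (oinv b)) (o b (oinv b)) = o b (oinv b) :=
    dis_idem_e o oinv ho hoi1 b
  have hcomm : o (o b (oinv b)) (o (oinv a) a) = o (o (oinv a) a) (o b (oinv b)) :=
    dis_idem_comm o oinv ho hoi1 hoi2 houniq heb hra
  have key : c a b = o a b := by
    calc c a b
        = c (o a (o (oinv a) a)) (o (o b (oinv b)) b) := by
          rw [dis_sand1 o oinv ho hoi1 a, hoi1 b]
      _ = o (c a (o b (oinv b))) (c (o (oinv a) a) b) :=
          hint a (o (oinv a) a) (o b (oinv b)) b
      _ = o (o a (o b (oinv b))) (o (o (oinv a) a) b) := by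
          rw [Mright (o b (oinv b)) a heb, Mleft (o (oinv a) a) b hra]
      _ = o a b := by
          rw [ho a (o b (oinv b)) (o (o (oinv a) a) b),
            ← ho (o b (oinv b)) (o (oinv a) a) b, hcomm,
            ho (o (oinv a) a) (o b (oinv b)) b,
            ← ho a (o (oinv a) a) (o (o b (oinv b)) b),
            dis_sand1 o oinv ho hoi1 a, hoi1 b]
  exact key.symm
end

section
/- Let (S,⊙) be an inverse semigroup with natural partial order ≤, let a ∈ S and let e be an idempotent with e ≤ a⊙a^⊙. Then e⊙a is the unique element x of S with x ≤ a and x⊙x^⊙ = e. -/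
section Aux
variable {S : Type*} (m : S → S → S) (inv : S → S)

lemma aux_gen (hassoc : ∀ a b d : S, m (m a b) d = m a (m b d))
    {p q r : S} (h : m p q = r) (y : S) : m p (m q y) = m r y := by
  rw [← hassoc, h]

lemma aux_inv_idem
    (huniq : ∀ a b : S, m (m a b) a = a → m (m b a) b = b → b = inv a)
    (f : S) (hf : m f f = f) : inv f = f :=
  (huniq f f (by rw [hf, hf]) (by rw [hf, hf])).symm

lemma aux_prod_idem
    (hassoc : ∀ a b d : S, m (m a b) d = m a (m b d))
    (hi1 : ∀ a : S, m (m a (inv a)) a = a)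
    (hi2 : ∀ a : S, m (m (inv a) a) (inv a) = inv a)
    (huniq : ∀ a b : S, m (m a b) a = a → m (m b a) b = b → b = inv a)
    (x y : S) (hx : m x x = x) (hy : m y y = y) :
    m (m x y) (m x y) = m x y := by
  have P : m (m (m x y) (inv (m x y))) (m x y) = m x y := hi1 _
  have Q : m (m (inv (m x y)) (m x y)) (inv (m x y)) = inv (m x y) := hi2 _
  have P' : m x (m y (m (inv (m x y)) (m x y))) = m x y := by
    have h := P; simp only [hassoc] at h; exact h
  have genP : ∀ t, m x (m y (m (inv (m x y)) (m x (m y t)))) = m x (m y t) := by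
    intro t
    have h := congrArg (fun z => m z t) P
    simp only [hassoc] at h; exact h
  have genQ : ∀ t, m (inv (m x y)) (m x (m y (m (inv (m x y)) t))) =
      m (inv (m x y)) t := by
    intro t
    have h := congrArg (fun z => m z t) Q
    simp only [hassoc] at h; exact h
  have hv : m y (m (inv (m x y)) x) = inv (m x y) := by
    apply huniq (m x y)
    · simp only [hassoc, aux_gen m hassoc hx, aux_gen m hassoc hy, P', genP]
    · simp only [hassoc, aux_gen m hassoc hx, aux_gen m hassoc hy, genQ]
  have huu : m (inv (m x y)) (inv (m x y)) = inv (m x y) := by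
    calc m (inv (m x y)) (inv (m x y))
        = m (m y (m (inv (m x y)) x)) (m y (m (inv (m x y)) x)) := by rw [hv]
      _ = m y (m (inv (m x y)) x) := by simp only [hassoc, genQ]
      _ = inv (m x y) := hv
  have hxy_eq : m x y = inv (m x y) := by
    have h1 : m x y = inv (inv (m x y)) := huniq (inv (m x y)) (m x y) Q P
    exact h1.trans (aux_inv_idem m inv huniq _ huu)
  rw [hxy_eq, huu]

lemma aux_comm
    (hassoc : ∀ a b d : S, m (m a b) d = m a (m b d))
    (hi1 : ∀ a : S, m (m a (inv a)) a = a)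
    (hi2 : ∀ a : S, m (m (inv a) a) (inv a) = inv a)
    (huniq : ∀ a b : S, m (m a b) a = a → m (m b a) b = b → b = inv a)
    (e f : S) (he : m e e = e) (hf : m f f = f) :
    m e f = m f e := by
  have hef := aux_prod_idem m inv hassoc hi1 hi2 huniq e f he hf
  have hfe := aux_prod_idem m inv hassoc hi1 hi2 huniq f e hf he
  have hef' : m e (m f (m e f)) = m e f := by
    have h := hef; simp only [hassoc] at h; exact h
  have hfe' : m f (m e (m f e)) = m f e := by
    have h := hfe; simp only [hassoc] at h; exact h
  have h1 : m f e = inv (m e f) := by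
    apply huniq
    · simp only [hassoc, aux_gen m hassoc hf, aux_gen m hassoc he, hef']
    · simp only [hassoc, aux_gen m hassoc he, aux_gen m hassoc hf, hfe']
  rw [h1, aux_inv_idem m inv huniq _ hef]

end Aux

theorem unique_restriction
    {S : Type*} (m : S → S → S) (inv : S → S)
    (hassoc : ∀ a b d : S, m (m a b) d = m a (m b d))
    (hi1 : ∀ a : S, m (m a (inv a)) a = a)
    (hi2 : ∀ a : S, m (m (inv a) a) (inv a) = inv a)
    (huniq : ∀ a b : S, m (m a b) a = a → m (m b a) b = b → b = inv a)
    (a e : S) (he : m e e = e)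
    (hle : ∃ f : S, m f f = f ∧ e = m f (m a (inv a))) :
    ((∃ f : S, m f f = f ∧ m e a = m f a) ∧ m (m e a) (inv (m e a)) = e) ∧
    (∀ x : S, (∃ f : S, m f f = f ∧ x = m f a) → m x (inv x) = e → x = m e a) := by
  obtain ⟨f, hf, hef⟩ := hle
  have haa : m (m a (inv a)) (m a (inv a)) = m a (inv a) := by
    rw [← hassoc, hi1]
  -- E1 : e ⊙ (a ⊙ a⁻¹) = e
  have E1 : m e (m a (inv a)) = e := by
    rw [hef, hassoc, haa]
  have genE1 : ∀ t, m e (m a (m (inv a) t)) = m e t := by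
    intro t
    rw [← hassoc a (inv a) t, ← hassoc e (m a (inv a)) t, E1]
  -- inverse of e ⊙ a
  have invea : inv (m e a) = m (inv a) e := by
    symm
    apply huniq
    · simp only [hassoc, aux_gen m hassoc he, genE1]
    · simp only [hassoc, aux_gen m hassoc he, genE1, he]
  refine ⟨⟨⟨f, hf, ?_⟩, ?_⟩, ?_⟩
  · rw [hef, hassoc, hi1]
  · rw [invea]
    simp only [hassoc, genE1, he]
  · rintro x ⟨g, hg, rfl⟩ hxx
    have hGc : m g (m a (inv a)) = m (m a (inv a)) g :=
      aux_comm m inv hassoc hi1 hi2 huniq g (m a (inv a)) hg haa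
    have hE2 : m (m g (m a (inv a))) a = m g a := by
      rw [hassoc, hi1]
    have invx : inv (m g a) = m (inv a) g := by
      symm
      apply huniq
      · calc m (m (m g a) (m (inv a) g)) (m g a)
            = m (m g (m (m a (inv a)) g)) (m g a) := by simp only [hassoc]
          _ = m (m (m a (inv a)) g) (m g a) := by
              rw [← hGc]
              simp only [hassoc, aux_gen m hassoc hg]
          _ = m (m a (inv a)) (m (m g g) a) := by simp only [hassoc]
          _ = m (m a (inv a)) (m g a) := by rw [hg]
          _ = m (m (m a (inv a)) g) a := (hassoc _ _ _).symm
          _ = m (m g (m a (inv a))) a := by rw [← hGc]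
          _ = m g a := hE2
      · calc m (m (m (inv a) g) (m g a)) (m (inv a) g)
            = m (inv a) (m (m g (m a (inv a))) g) := by
              simp only [hassoc, aux_gen m hassoc hg]
          _ = m (inv a) (m (m (m a (inv a)) g) g) := by rw [hGc]
          _ = m (inv a) (m (m a (inv a)) (m g g)) := by
              rw [hassoc (m a (inv a)) g g]
          _ = m (inv a) (m (m a (inv a)) g) := by rw [hg]
          _ = m (m (m (inv a) a) (inv a)) g := by simp only [hassoc]
          _ = m (inv a) g := by rw [hi2]
    have he2 : e = m g (m a (inv a)) := by
      rw [← hxx, invx]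
      calc m (m g a) (m (inv a) g)
          = m (m g (m a (inv a))) g := by simp only [hassoc]
        _ = m (m (m a (inv a)) g) g := by rw [hGc]
        _ = m (m a (inv a)) (m g g) := hassoc _ _ _
        _ = m (m a (inv a)) g := by rw [hg]
        _ = m g (m a (inv a)) := hGc.symm
    rw [he2, hE2]
end
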